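/- arXiv:2508.06216 — 12 statements merged into one kernel-verified Lean document; each statement's English description precedes it below -/
import Mathlib

section
/- Let 𝒢 be a grounded class of finite simple graphs. Then every level-𝒢 weighted graph has a sorted 𝒢-safe edge elimination scheme if and only if 𝒢 is sandwich monotone. -/
open SimpleGraph

variable {V : Type*}

/-- An edge ordering of `G`: a duplicate-free list containing exactly the edges of `G`. -/
def IsEdgeOrdering (G : SimpleGraph V) (l : List (Sym2 V)) : Prop :=
  l.Nodup ∧ ∀ e : Sym2 V, e ∈ l ↔ e ∈ G.edgeSet

/-- `G^i_τ`: the spanning subgraph of `G` obtained by removing the first `i` edges of `τ`. -/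
def schemeGraph (G : SimpleGraph V) (l : List (Sym2 V)) (i : ℕ) : SimpleGraph V :=
  G.deleteEdges {e | e ∈ l.take i}

/-- A `𝒢`-safe edge elimination scheme of `G`: an edge ordering such that each `G^i_τ` is
in `𝒢`. -/
def IsSafeScheme (𝒢 : SimpleGraph V → Prop) (G : SimpleGraph V) (l : List (Sym2 V)) : Prop :=
  IsEdgeOrdering G l ∧ ∀ i : ℕ, 1 ≤ i → i ≤ l.length → 𝒢 (schemeGraph G l i)

/-- The edge ordering is sorted: weights are non-decreasing along the ordering. -/
def IsSorted (ω : Sym2 V → ℕ) (l : List (Sym2 V)) : Prop :=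
  l.Pairwise fun a b => ω a ≤ ω b

/-- `(G, ω)` is a `k`-weighted graph: every edge has weight in `{1, …, k}` and every value in
`{1, …, k}` is attained by some edge. -/
def IsWeighting (G : SimpleGraph V) (ω : Sym2 V → ℕ) (k : ℕ) : Prop :=
  (∀ e ∈ G.edgeSet, 1 ≤ ω e ∧ ω e ≤ k) ∧
  (∀ j : ℕ, 1 ≤ j → j ≤ k → ∃ e ∈ G.edgeSet, ω e = j)

/-- The `i`-th level graph of `(G, ω)`: remove all edges of weight `< i`. -/
def levelGraph (G : SimpleGraph V) (ω : Sym2 V → ℕ) (i : ℕ) : SimpleGraph V :=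
  G.deleteEdges {e | ω e < i}

/-- `(G, ω)` is level-`𝒢`: all of its level graphs belong to `𝒢`. -/
def IsLevel (𝒢 : SimpleGraph V → Prop) (G : SimpleGraph V) (ω : Sym2 V → ℕ) (k : ℕ) : Prop :=
  ∀ i : ℕ, 1 ≤ i → i ≤ k + 1 → 𝒢 (levelGraph G ω i)

/-- A graph class `𝒢` is sandwich monotone if for each `G ∈ 𝒢` and each nonempty `𝒢`-safe set
`F ⊆ E(G)` there is a `𝒢`-safe edge in `F`. -/
def SandwichMonotone (𝒢 : SimpleGraph V → Prop) : Prop :=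
  ∀ G : SimpleGraph V, 𝒢 G → ∀ F : Set (Sym2 V), F ⊆ G.edgeSet → F.Nonempty →
    𝒢 (G.deleteEdges F) → ∃ e ∈ F, 𝒢 (G.deleteEdges {e})

/-- A graph class `𝒢` is grounded if for every `G ∈ 𝒢` the whole edge set of `G` is
`𝒢`-safe. -/
def Grounded (𝒢 : SimpleGraph V → Prop) : Prop :=
  ∀ G : SimpleGraph V, 𝒢 G → 𝒢 (G.deleteEdges G.edgeSet)

/-- `deleteEdges` only depends on the intersection with the edge set. -/
lemma deleteEdges_congr (G : SimpleGraph V) {s t : Set (Sym2 V)}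
    (h : ∀ e ∈ G.edgeSet, e ∈ s ↔ e ∈ t) : G.deleteEdges s = G.deleteEdges t := by
  ext v w
  simp only [deleteEdges_adj]
  constructor
  · rintro ⟨ha, hs⟩; exact ⟨ha, fun ht => hs ((h _ ((mem_edgeSet G).mpr ha)).mpr ht)⟩
  · rintro ⟨ha, ht⟩; exact ⟨ha, fun hs => ht ((h _ ((mem_edgeSet G).mpr ha)).mp hs)⟩

lemma exists_safe_list [Fintype V] {𝒢 : SimpleGraph V → Prop}
    (hmono : SandwichMonotone 𝒢) (n : ℕ) :
    ∀ (s : Finset (Sym2 V)) (G : SimpleGraph V), s.card = n → 𝒢 G → ↑s ⊆ G.edgeSet →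
    𝒢 (G.deleteEdges ↑s) →
    ∃ l : List (Sym2 V), l.Nodup ∧ (∀ e, e ∈ l ↔ e ∈ s) ∧
      ∀ i, i ≤ l.length → 𝒢 (G.deleteEdges {e | e ∈ l.take i}) := by
  classical
  induction n with
  | zero =>
    intro s G hcard hG _ _
    refine ⟨[], List.nodup_nil, ?_, ?_⟩
    · intro e
      simp [Finset.card_eq_zero.mp hcard]
    · intro i hi
      simp only [List.length_nil, Nat.le_zero] at hi
      subst hi
      simpa using hG
  | succ m ih =>
    intro s G hcard hG hsub hdel
    have hne : (↑s : Set (Sym2 V)).Nonempty := by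
      rw [Finset.coe_nonempty, ← Finset.card_pos, hcard]; omega
    obtain ⟨e, he, hGe⟩ := hmono G hG ↑s hsub hne hdel
    have he' : e ∈ s := he
    set G' := G.deleteEdges {e} with hG'
    set s' := s.erase e with hs'
    have hcard' : s'.card = m := by
      rw [hs', Finset.card_erase_of_mem he', hcard]; omega
    have hsub' : ↑s' ⊆ G'.edgeSet := by
      intro x hx
      rw [hG', edgeSet_deleteEdges]
      simp only [hs', Finset.coe_erase, Set.mem_diff, Set.mem_singleton_iff] at hx ⊢
      exact ⟨hsub hx.1, hx.2⟩
    have hins : ({e} : Set (Sym2 V)) ∪ ↑s' = ↑s := by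
      rw [hs', Finset.coe_erase]
      ext x
      simp only [Set.mem_union, Set.mem_singleton_iff, Set.mem_diff, Finset.mem_coe]
      constructor
      · rintro (rfl | ⟨hx, _⟩) <;> [exact he'; exact hx]
      · intro hx
        by_cases hxe : x = e
        · exact Or.inl hxe
        · exact Or.inr ⟨hx, hxe⟩
    have hdel' : 𝒢 (G'.deleteEdges ↑s') := by
      rw [hG', deleteEdges_deleteEdges, hins]; exact hdel
    obtain ⟨l, hnd, hmem, hsafe⟩ := ih s' G' hcard' hGe hsub' hdel'
    refine ⟨e :: l, ?_, ?_, ?_⟩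
    · refine List.nodup_cons.mpr ⟨fun hc => ?_, hnd⟩
      exact Finset.notMem_erase e s ((hmem e).mp hc)
    · intro x
      simp only [List.mem_cons, hmem, hs', Finset.mem_erase]
      constructor
      · rintro (rfl | ⟨_, hx⟩) <;> [exact he'; exact hx]
      · intro hx
        by_cases hxe : x = e
        · exact Or.inl hxe
        · exact Or.inr ⟨hxe, hx⟩
    · intro i hi
      cases i with
      | zero => simpa using hG
      | succ j =>
        have hj : j ≤ l.length := by simpa using hi
        have heq : G.deleteEdges {x | x ∈ (e :: l).take (j+1)} =
            G'.deleteEdges {x | x ∈ l.take j} := by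
          rw [hG', deleteEdges_deleteEdges]
          apply deleteEdges_congr
          intro x _
          simp [List.take_succ_cons, or_comm]
        rw [heq]
        exact hsafe j hj

lemma exists_sorted_scheme [Fintype V] {𝒢 : SimpleGraph V → Prop}
    (hmono : SandwichMonotone 𝒢) (n : ℕ) :
    ∀ (G : SimpleGraph V) (ω : Sym2 V → ℕ),
    (∀ e ∈ G.edgeSet, 1 ≤ ω e ∧ ω e ≤ n) →
    (∀ i : ℕ, 1 ≤ i → i ≤ n + 1 → 𝒢 (G.deleteEdges {e | ω e < i})) →
    ∃ l : List (Sym2 V), l.Pairwise (fun a b => ω a ≤ ω b) ∧ l.Nodup ∧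
      (∀ e, e ∈ l ↔ e ∈ G.edgeSet) ∧
      ∀ i, i ≤ l.length → 𝒢 (G.deleteEdges {e | e ∈ l.take i}) := by
  classical
  induction n with
  | zero =>
    intro G ω hw hlev
    have hempty : G.edgeSet = ∅ := by
      ext e
      simp only [Set.mem_empty_iff_false, iff_false]
      intro he; have := hw e he; omega
    refine ⟨[], List.Pairwise.nil, List.nodup_nil, ?_, ?_⟩
    · intro e; simp [hempty]
    · intro i hi
      simp only [List.length_nil, Nat.le_zero] at hi
      subst hi
      have h1 := hlev 1 le_rfl (by omega)
      have heq : G.deleteEdges {e | ω e < 1} = G.deleteEdges (∅ : Set (Sym2 V)) := by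
        apply deleteEdges_congr
        intro e he; have := hw e he
        simp only [Set.mem_setOf_eq, Set.mem_empty_iff_false, iff_false]; omega
      rw [heq] at h1
      simpa using h1
  | succ m ih =>
    intro G ω hw hlev
    have hG : 𝒢 G := by
      have h1 := hlev 1 le_rfl (by omega)
      have heq : G.deleteEdges {e | ω e < 1} = G.deleteEdges (∅ : Set (Sym2 V)) := by
        apply deleteEdges_congr
        intro e he; have := hw e he
        simp only [Set.mem_setOf_eq, Set.mem_empty_iff_false, iff_false]; omega
      rwa [heq, deleteEdges_empty] at h1
    set F : Finset (Sym2 V) := {e ∈ G.edgeFinset | ω e = 1} with hF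
    have hmemF : ∀ e, e ∈ F ↔ e ∈ G.edgeSet ∧ ω e = 1 := by
      intro e; simp [hF]
    have hFsub : ↑F ⊆ G.edgeSet := fun x hx => ((hmemF x).mp hx).1
    have hdelF : G.deleteEdges ↑F = G.deleteEdges {e | ω e < 2} := by
      apply deleteEdges_congr
      intro e he
      have := hw e he
      simp only [Finset.mem_coe, hmemF, Set.mem_setOf_eq]
      constructor
      · rintro ⟨_, h1⟩; omega
      · intro h; exact ⟨he, by omega⟩
    have hG2 : 𝒢 (G.deleteEdges ↑F) := by
      rw [hdelF]; exact hlev 2 (by omega) (by omega)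
    obtain ⟨l₁, hnd₁, hmem₁, hsafe₁⟩ :=
      exists_safe_list hmono F.card F G rfl hG hFsub hG2
    set G₂ := G.deleteEdges ↑F with hG₂def
    have hG₂edge : G₂.edgeSet = G.edgeSet \ ↑F := edgeSet_deleteEdges _
    have hmemG₂ : ∀ e, e ∈ G₂.edgeSet ↔ e ∈ G.edgeSet ∧ 2 ≤ ω e := by
      intro e
      rw [hG₂edge]
      simp only [Set.mem_diff, Finset.mem_coe, hmemF]
      constructor
      · rintro ⟨he, hnf⟩
        have := hw e he
        exact ⟨he, by by_contra h; exact hnf ⟨he, by omega⟩⟩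
      · rintro ⟨he, h2⟩
        exact ⟨he, fun hc => by omega⟩
    have hw₂ : ∀ e ∈ G₂.edgeSet, 1 ≤ ω e - 1 ∧ ω e - 1 ≤ m := by
      intro e he
      obtain ⟨he', h2⟩ := (hmemG₂ e).mp he
      have := hw e he'
      omega
    have hlev₂ : ∀ i : ℕ, 1 ≤ i → i ≤ m + 1 → 𝒢 (G₂.deleteEdges {e | ω e - 1 < i}) := by
      intro i h1 h2
      have heq : G₂.deleteEdges {e | ω e - 1 < i} = G.deleteEdges {e | ω e < i + 1} := by
        rw [hG₂def, deleteEdges_deleteEdges]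
        apply deleteEdges_congr
        intro e he
        have := hw e he
        simp only [Set.mem_union, Finset.mem_coe, hmemF, Set.mem_setOf_eq]
        omega
      rw [heq]
      exact hlev (i + 1) (by omega) (by omega)
    obtain ⟨l₂, hsort₂, hnd₂, hmem₂, hsafe₂⟩ := ih G₂ (fun e => ω e - 1) hw₂ hlev₂
    have hωl₁ : ∀ e ∈ l₁, ω e = 1 := fun e he => ((hmemF e).mp ((hmem₁ e).mp he)).2
    have hωl₂ : ∀ e ∈ l₂, 2 ≤ ω e := fun e he => ((hmemG₂ e).mp ((hmem₂ e).mp he)).2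
    refine ⟨l₁ ++ l₂, ?_, ?_, ?_, ?_⟩
    · rw [List.pairwise_append]
      refine ⟨List.pairwise_of_forall_mem_list fun a ha b hb => ?_,
        hsort₂.imp_of_mem fun {a b} ha hb h => ?_, fun a ha b hb => ?_⟩
      · rw [hωl₁ a ha, hωl₁ b hb]
      · have := hωl₂ b hb; omega
      · rw [hωl₁ a ha]; have := hωl₂ b hb; omega
    · rw [List.nodup_append]
      refine ⟨hnd₁, hnd₂, fun a ha b hb hab => ?_⟩
      have h1 := hωl₁ a ha
      have h2 := hωl₂ a (by rw [hab]; exact hb)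
      omega
    · intro e
      simp only [List.mem_append, hmem₁, hmem₂, Finset.mem_coe, hmemF, hmemG₂]
      constructor
      · rintro (⟨h, _⟩ | ⟨h, _⟩) <;> exact h
      · intro he
        have := hw e he
        by_cases h1 : ω e = 1
        · exact Or.inl ⟨he, h1⟩
        · exact Or.inr ⟨he, by omega⟩
    · intro i hi
      rw [List.length_append] at hi
      by_cases hle : i ≤ l₁.length
      · have : (l₁ ++ l₂).take i = l₁.take i := by
          rw [List.take_append, Nat.sub_eq_zero_of_le hle,
            List.take_zero, List.append_nil]
        rw [this]
        exact hsafe₁ i hle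
      · push_neg at hle
        have htake : (l₁ ++ l₂).take i = l₁ ++ l₂.take (i - l₁.length) := by
          rw [List.take_append, List.take_of_length_le (le_of_lt hle)]
        have heq : G.deleteEdges {e | e ∈ (l₁ ++ l₂).take i} =
            G₂.deleteEdges {e | e ∈ l₂.take (i - l₁.length)} := by
          rw [hG₂def, deleteEdges_deleteEdges, htake]
          apply deleteEdges_congr
          intro e _
          simp only [Set.mem_setOf_eq, List.mem_append, Set.mem_union, Finset.mem_coe, hmem₁,
            or_comm]
        rw [heq]
        exact hsafe₂ (i - l₁.length) (by omega)

/-- Let `𝒢` be a grounded graph class. Then every level-`𝒢` weighted graph has a sorted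
`𝒢`-safe edge elimination scheme if and only if `𝒢` is sandwich monotone. -/
theorem stmt1 {V : Type*} [Fintype V] (𝒢 : SimpleGraph V → Prop) (hgr : Grounded 𝒢) :
    (∀ (G : SimpleGraph V) (ω : Sym2 V → ℕ) (k : ℕ), IsWeighting G ω k →
      IsLevel 𝒢 G ω k → ∃ l : List (Sym2 V), IsSorted ω l ∧ IsSafeScheme 𝒢 G l) ↔
    SandwichMonotone 𝒢 := by
  classical
  constructor
  · -- forward: scheme existence → sandwich monotone
    intro hscheme G hG F hFsub hFne hFdel
    set ω : Sym2 V → ℕ := fun e => if e ∈ F then 1 else 2 with hω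
    set k : ℕ := if (G.edgeSet \ F).Nonempty then 2 else 1 with hk
    have hωF : ∀ e ∈ F, ω e = 1 := fun e he => by simp [hω, he]
    have hωnF : ∀ e, e ∉ F → ω e = 2 := fun e he => by simp [hω, he]
    have hω12 : ∀ e, ω e = 1 ∨ ω e = 2 := fun e => by
      by_cases h : e ∈ F
      · exact Or.inl (hωF e h)
      · exact Or.inr (hωnF e h)
    have hweight : IsWeighting G ω k := by
      constructor
      · intro e he
        by_cases h : e ∈ F
        · rw [hωF e h]
          have : 1 ≤ k := by rw [hk]; split <;> omega
          omega
        · rw [hωnF e h]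
          have : (G.edgeSet \ F).Nonempty := ⟨e, he, h⟩
          rw [hk, if_pos this]
          omega
      · intro j h1 h2
        have hk2 : k ≤ 2 := by rw [hk]; split <;> omega
        have hj2 : j ≤ 2 := le_trans h2 hk2
        interval_cases j
        · obtain ⟨e, he⟩ := hFne
          exact ⟨e, hFsub he, hωF e he⟩
        · have hk2' : k = 2 := by omega
          rw [hk] at hk2'
          by_cases hne : (G.edgeSet \ F).Nonempty
          · obtain ⟨e, he, hnf⟩ := hne
            exact ⟨e, he, hωnF e hnf⟩
          · rw [if_neg hne] at hk2'; omega
    have hlevel : IsLevel 𝒢 G ω k := by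
      intro i h1 h2
      have hk2 : k ≤ 2 := by rw [hk]; split <;> omega
      have hi3 : i ≤ 3 := by omega
      interval_cases i
      · have : levelGraph G ω 1 = G := by
          rw [levelGraph]
          rw [deleteEdges_congr G (t := (∅ : Set (Sym2 V))) ?_, deleteEdges_empty]
          intro e he
          simp only [Set.mem_setOf_eq, Set.mem_empty_iff_false, iff_false, not_lt]
          show 1 ≤ ω e
          rcases hω12 e with h | h <;> omega
        rwa [this]
      · have : levelGraph G ω 2 = G.deleteEdges F := by
          rw [levelGraph]
          apply deleteEdges_congr
          intro e he
          simp only [Set.mem_setOf_eq]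
          by_cases h : e ∈ F
          · rw [hωF e h]; simp [h]
          · rw [hωnF e h]; simp [h]
        rwa [this]
      · have : levelGraph G ω 3 = G.deleteEdges G.edgeSet := by
          rw [levelGraph]
          apply deleteEdges_congr
          intro e he
          simp only [Set.mem_setOf_eq]
          constructor
          · intro _; exact he
          · intro _; show ω e < 3; rcases hω12 e with h | h <;> omega
        rw [this]
        exact hgr G hG
    obtain ⟨l, hsort, ⟨⟨hnd, hmem⟩, hsafe⟩⟩ := hscheme G ω k hweight hlevel
    obtain ⟨f, hf⟩ := hFne
    have hfl : f ∈ l := (hmem f).mpr (hFsub hf)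
    obtain ⟨e₁, t, rfl⟩ : ∃ e₁ t, l = e₁ :: t := by
      cases l with
      | nil => simp at hfl
      | cons a t => exact ⟨a, t, rfl⟩
    have he₁F : e₁ ∈ F := by
      by_contra hc
      have h2 : ω e₁ = 2 := hωnF e₁ hc
      have hle : ω e₁ ≤ ω f := by
        rcases List.mem_cons.mp hfl with rfl | hft
        · rfl
        · exact (List.pairwise_cons.mp hsort).1 f hft
      rw [h2, hωF f hf] at hle
      omega
    refine ⟨e₁, he₁F, ?_⟩
    have := hsafe 1 le_rfl (by simp)
    have heq : schemeGraph G (e₁ :: t) 1 = G.deleteEdges {e₁} := by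
      rw [schemeGraph]
      congr 1
      ext x
      simp
    rwa [heq] at this
  · -- backward
    intro hmono G ω k hweight hlevel
    obtain ⟨l, hsort, hnd, hmem, hsafe⟩ :=
      exists_sorted_scheme hmono k G ω hweight.1 (fun i h1 h2 => hlevel i h1 h2)
    exact ⟨l, hsort, ⟨hnd, hmem⟩, fun i h1 h2 => hsafe i h2⟩
end

section
/- Let G be a split graph. An edge e ∈ E(G) is split-safe (i.e., G − e is a split graph) if and only if e is neither the middle edge of an induced P4 of G nor the middle edge of an induced diamond of G. -/
open SimpleGraph

variable {V : Type*}

/-- A split graph: the vertex set can be partitioned into a clique `C` and an independent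
set (its complement). -/
def IsSplitGraph (G : SimpleGraph V) : Prop :=
  ∃ C : Set V, G.IsClique C ∧ (Cᶜ : Set V).Pairwise fun u v => ¬ G.Adj u v

/-- The edge `xy` is the middle edge of an induced `P₄` of `G`: there are vertices `u, v`
such that `(u, x, y, v)` is an induced path (edges `ux, xy, yv` present; `uy, xv, uv`
absent). -/
def MiddleEdgeP4 (G : SimpleGraph V) (x y : V) : Prop :=
  ∃ u v : V, G.Adj u x ∧ G.Adj x y ∧ G.Adj y v ∧ ¬ G.Adj u y ∧ ¬ G.Adj x v ∧ ¬ G.Adj u v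

/-- The edge `xy` is the middle edge of an induced diamond of `G`: there are distinct
vertices `u, v` such that `ux, uy, vx, vy, xy` are edges and `uv` is not. -/
def MiddleEdgeDiamond (G : SimpleGraph V) (x y : V) : Prop :=
  ∃ u v : V, u ≠ v ∧ G.Adj u x ∧ G.Adj u y ∧ G.Adj v x ∧ G.Adj v y ∧ G.Adj x y ∧ ¬ G.Adj u v

lemma adj_del {G : SimpleGraph V} {x y a b : V} :
    (G.deleteEdges {s(x, y)}).Adj a b ↔ G.Adj a b ∧ ¬(a = x ∧ b = y) ∧ ¬(a = y ∧ b = x) := by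
  simp [SimpleGraph.deleteEdges_adj, Sym2.eq_iff, not_or]

lemma dia_symm {G : SimpleGraph V} {x y : V} (h : MiddleEdgeDiamond G y x) :
    MiddleEdgeDiamond G x y := by
  obtain ⟨u, v, hne, h1, h2, h3, h4, h5, h6⟩ := h
  exact ⟨u, v, hne, h2, h1, h4, h3, h5.symm, h6⟩

/-- If `x` has no neighbours in the independent part, `C \ {x}` splits `G - xy`. -/
lemma aux2 {G : SimpleGraph V} {C : Set V} (hC : G.IsClique C)
    (hI : (Cᶜ : Set V).Pairwise fun u v => ¬ G.Adj u v) {x y : V}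
    (hNx : ∀ i ∈ (Cᶜ : Set V), ¬ G.Adj x i) :
    IsSplitGraph (G.deleteEdges {s(x, y)}) := by
  refine ⟨C \ {x}, ?_, ?_⟩
  · intro a ha b hb hab
    refine adj_del.mpr ⟨hC ha.1 hb.1 hab, ?_, ?_⟩
    · rintro ⟨rfl, rfl⟩; exact ha.2 rfl
    · rintro ⟨rfl, rfl⟩; exact hb.2 rfl
  · intro u hu v hv huv hadj
    have hadj' := (adj_del.mp hadj).1
    simp only [Set.mem_compl_iff, Set.mem_diff, Set.mem_singleton_iff, not_and, not_not] at hu hv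
    by_cases huc : u ∈ C
    · have hux : u = x := hu huc
      subst hux
      by_cases hvc : v ∈ C
      · exact huv (hv hvc).symm
      · exact hNx v hvc hadj'
    · by_cases hvc : v ∈ C
      · have : v = x := hv hvc
        subst this
        exact hNx u huc hadj'.symm
      · exact hI huc hvc huv hadj'

/-- The hard case: `x, y` both in the clique, `d` a common neighbour in the independent part,
and `d` is the only independent neighbour of `y`. -/
lemma aux1 {G : SimpleGraph V} {C : Set V} (hC : G.IsClique C)
    (hI : (Cᶜ : Set V).Pairwise fun u v => ¬ G.Adj u v) {x y d : V}
    (hxC : x ∈ C) (hyC : y ∈ C)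
    (h2 : ¬ MiddleEdgeDiamond G x y) (hxy : G.Adj x y)
    (hdI : d ∈ (Cᶜ : Set V)) (hdx : G.Adj d x) (hdy : G.Adj d y)
    (hNy : ∀ i ∈ (Cᶜ : Set V), G.Adj y i → i = d) :
    IsSplitGraph (G.deleteEdges {s(x, y)}) := by
  have hdx' : d ≠ x := fun h => hdI (h ▸ hxC)
  have hdy' : d ≠ y := fun h => hdI (h ▸ hyC)
  -- d is adjacent to every vertex of C other than x, y
  have hdc : ∀ c ∈ C, c ≠ x → c ≠ y → G.Adj d c := by
    intro c hc hcx hcy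
    by_contra hnc
    exact h2 ⟨d, c, fun h => hdI (h ▸ hc), hdx, hdy, hC hc hxC hcx, hC hc hyC hcy, hxy, hnc⟩
  refine ⟨insert d (C \ {y}), ?_, ?_⟩
  · intro a ha b hb hab
    rcases Set.mem_insert_iff.mp ha with rfl | ha'
    · rcases Set.mem_insert_iff.mp hb with rfl | hb'
      · exact absurd rfl hab
      · refine adj_del.mpr ⟨?_, ?_, ?_⟩
        · by_cases hbx : b = x
          · exact hbx ▸ hdx
          · exact hdc b hb'.1 hbx hb'.2
        · rintro ⟨rfl, rfl⟩; exact hdx' rfl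
        · rintro ⟨rfl, rfl⟩; exact hdy' rfl
    · rcases Set.mem_insert_iff.mp hb with rfl | hb'
      · refine adj_del.mpr ⟨?_, ?_, ?_⟩
        · by_cases hax : a = x
          · exact hax ▸ hdx.symm
          · exact (hdc a ha'.1 hax ha'.2).symm
        · rintro ⟨rfl, rfl⟩; exact hdy' rfl
        · rintro ⟨rfl, rfl⟩; exact hdx' rfl
      · refine adj_del.mpr ⟨hC ha'.1 hb'.1 hab, ?_, ?_⟩
        · rintro ⟨rfl, rfl⟩; exact hb'.2 rfl
        · rintro ⟨rfl, rfl⟩; exact ha'.2 rfl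
  · intro u hu v hv huv hadj
    have hadj' := (adj_del.mp hadj).1
    simp only [Set.mem_compl_iff, Set.mem_insert_iff, Set.mem_diff, Set.mem_singleton_iff,
      not_or, not_and, not_not] at hu hv
    obtain ⟨hud, huC⟩ := hu
    obtain ⟨hvd, hvC⟩ := hv
    by_cases huc : u ∈ C
    · have huy : u = y := huC huc
      subst huy
      by_cases hvc : v ∈ C
      · exact huv (hvC hvc).symm
      · exact hvd (hNy v hvc hadj')
    · by_cases hvc : v ∈ C
      · have hvy : v = y := hvC hvc
        subst hvy
        exact hud (hNy u huc hadj'.symm)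
      · exact hI huc hvc huv hadj'

/-- Let `G` be a split graph. An edge `xy` of `G` is split-safe iff it is neither the middle
edge of an induced `P₄` nor the middle edge of an induced diamond of `G`. -/
theorem stmt4 {V : Type*} [Fintype V] (G : SimpleGraph V) (hG : IsSplitGraph G)
    (x y : V) (hxy : G.Adj x y) :
    IsSplitGraph (G.deleteEdges {s(x, y)}) ↔
      ¬ MiddleEdgeP4 G x y ∧ ¬ MiddleEdgeDiamond G x y := by
  have hxny : x ≠ y := hxy.ne
  constructor
  · rintro ⟨C, hC, hI⟩
    constructor
    · rintro ⟨u, v, hux, _, hyv, huy, hxv, huv⟩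
      have huny : u ≠ y := by rintro rfl; exact huv hyv
      have hvnx : v ≠ x := by rintro rfl; exact huv hux
      have hunv : u ≠ v := by rintro rfl; exact hxv hux.symm
      have hux' : (G.deleteEdges {s(x, y)}).Adj u x :=
        adj_del.mpr ⟨hux, by rintro ⟨rfl, rfl⟩; exact hxny rfl,
          by rintro ⟨rfl, _⟩; exact huny rfl⟩
      have hyv' : (G.deleteEdges {s(x, y)}).Adj y v :=
        adj_del.mpr ⟨hyv, by rintro ⟨rfl, _⟩; exact hxny rfl,
          by rintro ⟨_, rfl⟩; exact hvnx rfl⟩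
      have h1 : u ∈ C ∨ x ∈ C := by
        by_contra h; push_neg at h
        exact hI h.1 h.2 hux.ne hux'
      have h2 : y ∈ C ∨ v ∈ C := by
        by_contra h; push_neg at h
        exact hI h.1 h.2 hyv.ne hyv'
      rcases h1 with h1 | h1 <;> rcases h2 with h2 | h2
      · exact huy (adj_del.mp (hC h1 h2 huny)).1
      · exact huv (adj_del.mp (hC h1 h2 hunv)).1
      · exact (adj_del.mp (hC h1 h2 hxny)).2.1 ⟨rfl, rfl⟩
      · exact hxv (adj_del.mp (hC h1 h2 hvnx.symm)).1
    · rintro ⟨u, v, hunv, hux, huy, hvx, hvy, _, huv⟩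
      have hux' : (G.deleteEdges {s(x, y)}).Adj u x :=
        adj_del.mpr ⟨hux, by rintro ⟨rfl, rfl⟩; exact hxny rfl,
          by rintro ⟨rfl, _⟩; exact huy.ne rfl⟩
      have huy' : (G.deleteEdges {s(x, y)}).Adj u y :=
        adj_del.mpr ⟨huy, by rintro ⟨rfl, _⟩; exact hux.ne rfl,
          by rintro ⟨rfl, rfl⟩; exact hxny rfl⟩
      have hvx' : (G.deleteEdges {s(x, y)}).Adj v x :=
        adj_del.mpr ⟨hvx, by rintro ⟨rfl, rfl⟩; exact hxny rfl,
          by rintro ⟨rfl, _⟩; exact hvy.ne rfl⟩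
      have hvy' : (G.deleteEdges {s(x, y)}).Adj v y :=
        adj_del.mpr ⟨hvy, by rintro ⟨rfl, _⟩; exact hvx.ne rfl,
          by rintro ⟨rfl, rfl⟩; exact hxny rfl⟩
      have h1 : u ∉ C ∨ v ∉ C := by
        by_contra h; push_neg at h
        exact huv (adj_del.mp (hC h.1 h.2 hunv)).1
      have h2 : x ∉ C ∨ y ∉ C := by
        by_contra h; push_neg at h
        exact (adj_del.mp (hC h.1 h.2 hxny)).2.1 ⟨rfl, rfl⟩
      rcases h1 with h1 | h1 <;> rcases h2 with h2 | h2
      · exact hI h1 h2 hux.ne hux'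
      · exact hI h1 h2 huy.ne huy'
      · exact hI h1 h2 hvx.ne hvx'
      · exact hI h1 h2 hvy.ne hvy'
  · rintro ⟨h1, h2⟩
    obtain ⟨C, hC, hI⟩ := hG
    by_cases hNx : ∀ i ∈ (Cᶜ : Set V), ¬ G.Adj x i
    · exact aux2 hC hI hNx
    by_cases hNy : ∀ i ∈ (Cᶜ : Set V), ¬ G.Adj y i
    · rw [Sym2.eq_swap]
      exact aux2 hC hI hNy
    push_neg at hNx hNy
    obtain ⟨a, haI, hax⟩ := hNx
    obtain ⟨b, hbI, hby⟩ := hNy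
    -- x and y are in C
    have hxC : x ∈ C := by
      by_contra h
      exact hI h haI hax.ne hax
    have hyC : y ∈ C := by
      by_contra h
      exact hI h hbI hby.ne hby
    -- get a common neighbour d of x and y in Cᶜ
    obtain ⟨d, hdI, hdx, hdy⟩ : ∃ d ∈ (Cᶜ : Set V), G.Adj d x ∧ G.Adj d y := by
      by_cases hay : G.Adj a y
      · exact ⟨a, haI, hax.symm, hay⟩
      by_cases hbx : G.Adj b x
      · exact ⟨b, hbI, hbx, hby.symm⟩
      have hab : a ≠ b := by rintro rfl; exact hay hby.symm
      exact absurd ⟨a, b, hax.symm, hxy, hby, hay,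
        fun hh => hbx hh.symm, hI haI hbI hab⟩ h1
    -- the key dichotomy: d is the unique independent neighbour of x or of y
    have hkey : (∀ i ∈ (Cᶜ : Set V), G.Adj x i → i = d) ∨
        (∀ i ∈ (Cᶜ : Set V), G.Adj y i → i = d) := by
      by_contra h
      push_neg at h
      obtain ⟨⟨i, hiI, hix, hid⟩, ⟨j, hjI, hjy, hjd⟩⟩ := h
      have hiy : ¬ G.Adj i y := by
        intro hiy
        exact h2 ⟨i, d, hid, hix.symm, hiy, hdx, hdy, hxy, hI hiI hdI hid⟩
      have hjx : ¬ G.Adj j x := by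
        intro hjx
        exact h2 ⟨j, d, hjd, hjx, hjy.symm, hdx, hdy, hxy, hI hjI hdI hjd⟩
      have hij : i ≠ j := by rintro rfl; exact hjx hix.symm
      exact h1 ⟨i, j, hix.symm, hxy, hjy, hiy, fun hh => hjx hh.symm, hI hiI hjI hij⟩
    rcases hkey with hkey | hkey
    · rw [Sym2.eq_swap]
      exact aux1 hC hI hyC hxC (fun hh => h2 (dia_symm hh)) hxy.symm hdI hdy hdx hkey
    · exact aux1 hC hI hxC hyC h2 hxy hdI hdx hdy hkey
end

section
/- The class of split graphs is degree sandwich monotone: if G′ is a split graph and F ⊆ E(G′) is a set of edges such that G′ − F is a split graph, then for every degree-minimal edge e in F, the graph G′ − e is a split graph. -/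
open SimpleGraph

variable {V : Type*}

/-- The degree of a vertex `v` in the graph `G`. -/
noncomputable def deg (G : SimpleGraph V) (v : V) : ℕ := (G.neighborSet v).ncard

/-- The edge `uv ∈ F` is degree-minimal in `F`: `u` has the smallest degree in `G` among all
vertices incident to an edge of `F`, and the degree of `v` in `G` is smallest among all
neighbors of `u` joined to `u` by an edge of `F`. -/
def DegreeMinimal (G : SimpleGraph V) (F : Set (Sym2 V)) (u v : V) : Prop :=
  s(u, v) ∈ F ∧
  (∀ x y : V, s(x, y) ∈ F → deg G u ≤ deg G x) ∧
  (∀ z : V, s(u, z) ∈ F → deg G v ≤ deg G z)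

section Aux

variable {G : SimpleGraph V}

/-- A split graph contains no induced `2K₂`. -/
lemma aux_two (hsplit : IsSplitGraph G) {p q r s : V}
    (hpq : G.Adj p q) (hrs : G.Adj r s)
    (hpr : ¬ G.Adj p r) (hps : ¬ G.Adj p s) (hqr : ¬ G.Adj q r) (hqs : ¬ G.Adj q s)
    (h1 : p ≠ r) (h2 : p ≠ s) (h3 : q ≠ r) (h4 : q ≠ s) : False := by
  obtain ⟨K, hK, hS⟩ := hsplit
  have hp : p ∈ K ∨ q ∈ K := by
    by_contra hc; push_neg at hc
    exact hS hc.1 hc.2 hpq.ne hpq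
  have hr : r ∈ K ∨ s ∈ K := by
    by_contra hc; push_neg at hc
    exact hS hc.1 hc.2 hrs.ne hrs
  rcases hp with hp | hp <;> rcases hr with hr | hr
  · exact hpr (hK hp hr h1)
  · exact hps (hK hp hr h2)
  · exact hqr (hK hp hr h3)
  · exact hqs (hK hp hr h4)

lemma aux_nbr_sub {C : Set V} (hI : (Cᶜ : Set V).Pairwise fun x y => ¬ G.Adj x y)
    {x : V} (hx : x ∉ C) : G.neighborSet x ⊆ C := by
  intro y hy
  have hadj : G.Adj x y := hy
  by_contra hyC
  exact hI hx hyC hadj.ne hadj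

lemma aux_deg_le [Fintype V] {C : Set V}
    (hI : (Cᶜ : Set V).Pairwise fun x y => ¬ G.Adj x y)
    {x : V} (hx : x ∉ C) : deg G x ≤ C.ncard :=
  Set.ncard_le_ncard (aux_nbr_sub hI hx) (Set.toFinite C)

lemma aux_full [Fintype V] {C : Set V}
    (hI : (Cᶜ : Set V).Pairwise fun x y => ¬ G.Adj x y)
    {x : V} (hx : x ∉ C) (hd : C.ncard ≤ deg G x) : ∀ w ∈ C, G.Adj x w := by
  have heq : G.neighborSet x = C :=
    Set.eq_of_subset_of_ncard_le (aux_nbr_sub hI hx) hd (Set.toFinite C)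
  intro w hw
  rw [← heq] at hw
  exact hw

lemma aux_sub_nbr {C : Set V} (hC : G.IsClique C) {w a : V}
    (hw : w ∈ C) (ha : G.Adj w a) (haC : a ∉ C) :
    insert a (C \ {w}) ⊆ G.neighborSet w := by
  intro x hx
  rcases hx with rfl | hx
  · exact ha
  · exact hC hw hx.1 (fun h => hx.2 h.symm)

lemma aux_deg_ge [Fintype V] {C : Set V} (hC : G.IsClique C) {w a : V}
    (hw : w ∈ C) (ha : G.Adj w a) (haC : a ∉ C) : C.ncard ≤ deg G w := by
  calc C.ncard = (C \ {w}).ncard + 1 :=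
        (Set.ncard_diff_singleton_add_one hw (Set.toFinite C)).symm
    _ = (insert a (C \ {w})).ncard :=
        (Set.ncard_insert_of_notMem (fun hx => haC hx.1) (Set.toFinite _)).symm
    _ ≤ deg G w := Set.ncard_le_ncard (aux_sub_nbr hC hw ha haC) (Set.toFinite _)

lemma aux_unique [Fintype V] {C : Set V} (hC : G.IsClique C) {w a : V}
    (hw : w ∈ C) (ha : G.Adj w a) (haC : a ∉ C) (hd : deg G w ≤ C.ncard) :
    ∀ z, G.Adj w z → z ∉ C → z = a := by
  have hcard : (G.neighborSet w).ncard ≤ (insert a (C \ {w})).ncard := by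
    have h1 : (insert a (C \ {w})).ncard = (C \ {w}).ncard + 1 :=
      Set.ncard_insert_of_notMem (fun hx => haC hx.1) (Set.toFinite _)
    have h2 : (C \ {w}).ncard + 1 = C.ncard :=
      Set.ncard_diff_singleton_add_one hw (Set.toFinite C)
    have h3 : deg G w ≤ C.ncard := hd
    calc (G.neighborSet w).ncard = deg G w := rfl
      _ ≤ C.ncard := hd
      _ = (insert a (C \ {w})).ncard := by rw [h1, h2]
  have heq : insert a (C \ {w}) = G.neighborSet w :=
    Set.eq_of_subset_of_ncard_le (aux_sub_nbr hC hw ha haC) hcard (Set.toFinite _)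
  intro z hz hzC
  have hmem : z ∈ insert a (C \ {w}) := by rw [heq]; exact hz
  rcases hmem with rfl | hmem
  · rfl
  · exact absurd hmem.1 hzC

lemma aux_exists_out [Fintype V] {C : Set V} {w : V}
    (hw : w ∈ C) (hd : C.ncard ≤ deg G w) : ∃ x, G.Adj w x ∧ x ∉ C := by
  by_contra hc
  push_neg at hc
  have hsub : G.neighborSet w ⊆ C \ {w} := by
    intro x hx
    have hadj : G.Adj w x := hx
    exact ⟨hc x hadj, fun h => G.loopless.irrefl w (h ▸ hadj)⟩
  have h1 : deg G w ≤ (C \ {w}).ncard := Set.ncard_le_ncard hsub (Set.toFinite _)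
  have h2 : (C \ {w}).ncard + 1 = C.ncard :=
    Set.ncard_diff_singleton_add_one hw (Set.toFinite C)
  omega

/-- Construction: remove `u` from the clique, no outside neighbors of `u`. -/
lemma aux_con0 {C : Set V} (hC : G.IsClique C)
    (hI : (Cᶜ : Set V).Pairwise fun x y => ¬ G.Adj x y)
    {u v : V} (hu : u ∈ C) (hNu : ∀ z, G.Adj u z → z ∈ C) :
    IsSplitGraph (G.deleteEdges {s(u, v)}) := by
  refine ⟨C \ {u}, ?_, ?_⟩
  · intro x hx y hy hxy
    rw [deleteEdges_adj]
    refine ⟨hC hx.1 hy.1 hxy, ?_⟩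
    simp only [Set.mem_singleton_iff, Sym2.eq_iff]
    rintro (⟨rfl, rfl⟩ | ⟨rfl, rfl⟩)
    · exact hx.2 rfl
    · exact hy.2 rfl
  · intro x hx y hy hxy hadj
    rw [deleteEdges_adj] at hadj
    have hG := hadj.1
    simp only [Set.mem_compl_iff, Set.mem_diff, Set.mem_singleton_iff, not_and, not_not] at hx hy
    by_cases hxC : x ∈ C
    · have hxu := hx hxC
      subst hxu
      by_cases hyC : y ∈ C
      · exact hxy (hy hyC).symm
      · exact hyC (hNu y hG)
    · by_cases hyC : y ∈ C
      · have hyu := hy hyC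
        subst hyu
        exact hxC (hNu x hG.symm)
      · exact hI hxC hyC hxy hG

/-- Construction: remove `u` from the clique and add a full outside vertex `c`,
where `c` is the unique outside neighbor of `u`. -/
lemma aux_con1 {C : Set V} (hC : G.IsClique C)
    (hI : (Cᶜ : Set V).Pairwise fun x y => ¬ G.Adj x y)
    {u v c : V} (hu : u ∈ C) (hcC : c ∉ C)
    (hadj : ∀ w ∈ C, w ≠ u → G.Adj c w)
    (hNu : ∀ z, G.Adj u z → z ∉ C → z = c) :
    IsSplitGraph (G.deleteEdges {s(u, v)}) := by
  have hucD : u ∉ insert c (C \ {u}) := by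
    rintro (rfl | h)
    · exact hcC hu
    · exact h.2 rfl
  refine ⟨insert c (C \ {u}), ?_, ?_⟩
  · intro x hx y hy hxy
    rw [deleteEdges_adj]
    constructor
    · rcases hx with rfl | hx <;> rcases hy with rfl | hy
      · exact absurd rfl hxy
      · exact hadj y hy.1 hy.2
      · exact (hadj x hx.1 hx.2).symm
      · exact hC hx.1 hy.1 hxy
    · simp only [Set.mem_singleton_iff, Sym2.eq_iff]
      rintro (⟨rfl, rfl⟩ | ⟨rfl, rfl⟩)
      · exact hucD hx
      · exact hucD hy
  · intro x hx y hy hxy hadj2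
    rw [deleteEdges_adj] at hadj2
    obtain ⟨hGxy, -⟩ := hadj2
    simp only [Set.mem_compl_iff, Set.mem_insert_iff, Set.mem_diff, Set.mem_singleton_iff,
      not_or, not_and, not_not] at hx hy
    by_cases hxC : x ∈ C
    · have hxu := hx.2 hxC
      subst hxu
      by_cases hyC : y ∈ C
      · exact hxy (hy.2 hyC).symm
      · exact hy.1 (hNu y hGxy hyC)
    · by_cases hyC : y ∈ C
      · have hyu := hy.2 hyC
        subst hyu
        exact hx.1 (hNu x hGxy.symm hxC)
      · exact hI hxC hyC hxy hGxy

/-- Construction: the deleted edge has an endpoint outside the clique. -/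
lemma aux_conC {C : Set V} (hC : G.IsClique C)
    (hI : (Cᶜ : Set V).Pairwise fun x y => ¬ G.Adj x y)
    {u v : V} (h : u ∉ C ∨ v ∉ C) :
    IsSplitGraph (G.deleteEdges {s(u, v)}) := by
  refine ⟨C, ?_, ?_⟩
  · intro x hx y hy hxy
    rw [deleteEdges_adj]
    refine ⟨hC hx hy hxy, ?_⟩
    simp only [Set.mem_singleton_iff, Sym2.eq_iff]
    rintro (⟨rfl, rfl⟩ | ⟨rfl, rfl⟩)
    · rcases h with h | h
      · exact h hx
      · exact h hy
    · rcases h with h | h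
      · exact h hy
      · exact h hx
  · intro x hx y hy hxy hadj
    rw [deleteEdges_adj] at hadj
    exact hI hx hy hxy hadj.1

/-- The main structural step in the hard case: `p ∈ {u,v}` lies outside the clique `K`
of `G - F`, no `F`-edge joins `p` to a vertex outside `C`, and degree conditions hold.
Then the outside neighbor `c` of `p` is unique and adjacent to all of `C \ {p}`. -/
lemma aux_sub2 [Fintype V] {C K : Set V} {F : Set (Sym2 V)}
    (hC : G.IsClique C) (hI : (Cᶜ : Set V).Pairwise fun x y => ¬ G.Adj x y)
    (hK : (G.deleteEdges F).IsClique K)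
    (hS : (Kᶜ : Set V).Pairwise fun x y => ¬ (G.deleteEdges F).Adj x y)
    {p c : V} (hp : p ∈ C) (hpK : p ∉ K)
    (hpc : G.Adj p c) (hcC : c ∉ C)
    (hnoF : ∀ z, G.Adj p z → z ∉ C → s(p, z) ∉ F)
    (hdegw : ∀ w, s(p, w) ∈ F → C.ncard ≤ deg G w)
    (hfullx : ∀ x y, s(x, y) ∈ F → x ∉ C → ∀ w ∈ C, G.Adj x w) :
    (∀ w ∈ C, w ≠ p → G.Adj c w) ∧ (∀ z, G.Adj p z → z ∉ C → z = c) := by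
  have hHpc : (G.deleteEdges F).Adj p c := by
    rw [deleteEdges_adj]
    exact ⟨hpc, hnoF c hpc hcC⟩
  have hcK : c ∈ K := by
    by_contra hcK
    exact hS hpK hcK hpc.ne hHpc
  have hNp : ∀ z, G.Adj p z → z ∉ C → z = c := by
    intro z hz hzC
    have hHpz : (G.deleteEdges F).Adj p z := by
      rw [deleteEdges_adj]
      exact ⟨hz, hnoF z hz hzC⟩
    have hzK : z ∈ K := by
      by_contra hzK
      exact hS hpK hzK hz.ne hHpz
    by_contra hzc
    have hH : (G.deleteEdges F).Adj z c := hK hzK hcK hzc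
    rw [deleteEdges_adj] at hH
    exact hI hzC hcC hzc hH.1
  refine ⟨?_, hNp⟩
  intro w hw hwp
  by_contra hcw
  by_cases hwK : w ∈ K
  · have hH : (G.deleteEdges F).Adj c w := hK hcK hwK (fun h => hcC (h ▸ hw))
    rw [deleteEdges_adj] at hH
    exact hcw hH.1
  · -- w ∈ S, so the edge pw is in F
    have hpw : G.Adj p w := hC hp hw (Ne.symm hwp)
    have hpwF : s(p, w) ∈ F := by
      by_contra hnf
      exact hS hpK hwK hpw.ne (by rw [deleteEdges_adj]; exact ⟨hpw, hnf⟩)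
    have hdw : C.ncard ≤ deg G w := hdegw w hpwF
    obtain ⟨x, hwx, hxC⟩ := aux_exists_out hw hdw
    by_cases hxF : s(w, x) ∈ F
    · have hxfull : ∀ w' ∈ C, G.Adj x w' :=
        hfullx x w (by rw [Sym2.eq_swap]; exact hxF) hxC
      have hpx : G.Adj p x := (hxfull p hp).symm
      have hxc : x = c := hNp x hpx hxC
      exact hcw (hxc ▸ hwx.symm)
    · have hHwx : (G.deleteEdges F).Adj w x := by
        rw [deleteEdges_adj]; exact ⟨hwx, hxF⟩
      have hcx : c ≠ x := fun h => hcw (h ▸ hwx.symm)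
      refine aux_two ⟨K, hK, hS⟩ hHpc hHwx ?_ ?_ ?_ ?_ ?_ ?_ ?_ hcx
      · -- ¬ H.Adj p w
        intro hA
        rw [deleteEdges_adj] at hA
        exact hA.2 hpwF
      · -- ¬ H.Adj p x
        intro hA
        rw [deleteEdges_adj] at hA
        exact hcx ((hNp x hA.1 hxC).symm)
      · -- ¬ H.Adj c w
        intro hA
        rw [deleteEdges_adj] at hA
        exact hcw hA.1
      · -- ¬ H.Adj c x
        intro hA
        rw [deleteEdges_adj] at hA
        exact hI hcC hxC hcx hA.1
      · exact Ne.symm hwp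
      · exact fun h => hxC (h ▸ hp)
      · exact fun h => hcC (h ▸ hw)

end Aux

/-- The class of split graphs is degree sandwich monotone. -/
theorem stmt5 {V : Type*} [Fintype V] (G' : SimpleGraph V) (hG' : IsSplitGraph G')
    (F : Set (Sym2 V)) (hF : F ⊆ G'.edgeSet) (hsafe : IsSplitGraph (G'.deleteEdges F))
    (u v : V) (h : DegreeMinimal G' F u v) :
    IsSplitGraph (G'.deleteEdges {s(u, v)}) := by
  obtain ⟨C, hC, hI⟩ := hG'
  obtain ⟨K, hK, hS⟩ := hsafe
  obtain ⟨heF, hmin1, hmin2⟩ := h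
  have huv : G'.Adj u v := (SimpleGraph.mem_edgeSet _).mp (hF heF)
  by_cases hu : u ∈ C
  · by_cases hv : v ∈ C
    · -- hard case: u, v ∈ C
      by_cases hA : ∃ z, G'.Adj u z ∧ z ∉ C
      · by_cases hB : ∃ z, G'.Adj v z ∧ z ∉ C
        · obtain ⟨a, hua, haC⟩ := hA
          obtain ⟨b, hvb, hbC⟩ := hB
          have hdu : C.ncard ≤ deg G' u := aux_deg_ge hC hu hua haC
          have hdv : C.ncard ≤ deg G' v := aux_deg_ge hC hv hvb hbC
          have hfullx : ∀ x y, s(x, y) ∈ F → x ∉ C → ∀ w ∈ C, G'.Adj x w := by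
            intro x y hxy hxC
            exact aux_full hI hxC (le_trans hdu (hmin1 x y hxy))
          have huvK : u ∉ K ∨ v ∉ K := by
            by_contra hc
            push_neg at hc
            have hA2 := hK hc.1 hc.2 huv.ne
            rw [deleteEdges_adj] at hA2
            exact hA2.2 heF
          rcases huvK with hpK | hpK
          · -- u ∉ K
            by_cases hsub1 : ∃ z, G'.Adj u z ∧ z ∉ C ∧ s(u, z) ∈ F
            · obtain ⟨a', h1, h2, h3⟩ := hsub1
              have hda : deg G' a' ≤ C.ncard := aux_deg_le hI h2
              have hfa : ∀ w ∈ C, G'.Adj a' w :=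
                aux_full hI h2 (le_trans hdv (hmin2 a' h3))
              have hdu' : deg G' u ≤ C.ncard :=
                le_trans (hmin1 a' u (by rw [Sym2.eq_swap]; exact h3)) hda
              exact aux_con1 hC hI hu h2 (fun w hw _ => hfa w hw)
                (aux_unique hC hu h1 h2 hdu')
            · push_neg at hsub1
              have hdegw : ∀ w, s(u, w) ∈ F → C.ncard ≤ deg G' w :=
                fun w hw => le_trans hdv (hmin2 w hw)
              obtain ⟨hfc, hNu⟩ := aux_sub2 hC hI hK hS hu hpK hua haC hsub1 hdegw hfullx
              exact aux_con1 hC hI hu haC hfc hNu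
          · -- v ∉ K
            by_cases hsub1 : ∃ z, G'.Adj v z ∧ z ∉ C ∧ s(v, z) ∈ F
            · obtain ⟨b', h1, h2, h3⟩ := hsub1
              have hdb : deg G' b' ≤ C.ncard := aux_deg_le hI h2
              have hn : C.ncard ≤ deg G' b' :=
                le_trans hdu (hmin1 b' v (by rw [Sym2.eq_swap]; exact h3))
              have hfb : ∀ w ∈ C, G'.Adj b' w := aux_full hI h2 hn
              have hdu' : deg G' u ≤ C.ncard :=
                le_trans (hmin1 b' v (by rw [Sym2.eq_swap]; exact h3)) hdb
              have hub' : G'.Adj u b' := (hfb u hu).symm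
              exact aux_con1 hC hI hu h2 (fun w hw _ => hfb w hw)
                (aux_unique hC hu hub' h2 hdu')
            · push_neg at hsub1
              have hdegw : ∀ w, s(v, w) ∈ F → C.ncard ≤ deg G' w :=
                fun w hw => le_trans hdu (hmin1 w v (by rw [Sym2.eq_swap]; exact hw))
              obtain ⟨hfc, hNv⟩ := aux_sub2 hC hI hK hS hv hpK hvb hbC hsub1 hdegw hfullx
              rw [show s(u, v) = s(v, u) from Sym2.eq_swap]
              exact aux_con1 hC hI hv hbC hfc hNv
        · push_neg at hB
          rw [show s(u, v) = s(v, u) from Sym2.eq_swap]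
          exact aux_con0 hC hI hv hB
      · push_neg at hA
        exact aux_con0 hC hI hu hA
    · exact aux_conC hC hI (Or.inr hv)
  · exact aux_conC hC hI (Or.inl hu)
end

section
/- The class of split graphs is sandwich monotone: if G′ is a split graph and F ⊆ E(G′) is a nonempty set of edges such that G′ − F is a split graph, then there exists an edge e ∈ F such that G′ − e is a split graph. -/
open SimpleGraph

variable {V : Type*}

/-- The class of split graphs is sandwich monotone. -/
theorem stmt6 {V : Type*} [Fintype V] (G' : SimpleGraph V) (hG' : IsSplitGraph G')
    (F : Set (Sym2 V)) (hF : F ⊆ G'.edgeSet) (hne : F.Nonempty)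
    (hsafe : IsSplitGraph (G'.deleteEdges F)) :
    ∃ e ∈ F, IsSplitGraph (G'.deleteEdges {e}) := by
  classical
  obtain ⟨C1, hC1, hI1⟩ := hsafe
  -- choose a split partition of G' with clique side of maximum size
  set S : Set (Set V) :=
    {C | G'.IsClique C ∧ (Cᶜ : Set V).Pairwise fun u v => ¬ G'.Adj u v} with hS
  have hSne : S.Nonempty := hG'
  obtain ⟨C, hCS, hmax0⟩ := Set.Finite.exists_maximalFor Set.ncard S (Set.toFinite S) hSne
  obtain ⟨hC, hI⟩ := hCS
  -- no vertex outside C is adjacent to all of C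
  have hmax : ∀ w, w ∉ C → ∃ x ∈ C, ¬ G'.Adj w x := by
    intro w hw
    by_contra h
    push_neg at h
    have hclq : G'.IsClique (insert w C) := hC.insert (fun b hb _ => h b hb)
    have hind : ((insert w C)ᶜ : Set V).Pairwise fun u v => ¬ G'.Adj u v := by
      apply hI.mono
      intro x hx
      simp only [Set.mem_compl_iff, Set.mem_insert_iff] at hx ⊢
      tauto
    have hmem : insert w C ∈ S := ⟨hclq, hind⟩
    have hle : C.ncard ≤ (insert w C).ncard :=
      Set.ncard_le_ncard (Set.subset_insert _ _) (Set.toFinite _)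
    have heq := hmax0 hmem hle
    rw [Set.ncard_insert_of_notMem hw (Set.toFinite C)] at heq
    omega
  by_cases hA : ∀ e ∈ F, ∀ u v : V, e = s(u, v) → u ∈ C ∧ v ∈ C
  · -- Case B : all edges of F lie inside C
    have hB : ∀ u v : V, s(u, v) ∈ F → u ∈ C ∧ v ∈ C := fun u v h => hA _ h u v rfl
    -- pairs in X = C \ C1 are F-edges
    have hXF : ∀ u v : V, u ∈ C → u ∉ C1 → v ∈ C → v ∉ C1 → u ≠ v → s(u, v) ∈ F := by
      intro u v huC huC1 hvC hvC1 huv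
      have hadj : G'.Adj u v := hC huC hvC huv
      by_contra h
      have hGadj : (G'.deleteEdges F).Adj u v := by
        rw [deleteEdges_adj]; exact ⟨hadj, h⟩
      exact hI1 huC1 hvC1 huv hGadj
    by_cases hX : ∃ a, (a ∈ C ∧ a ∉ C1) ∧ ∃ b, (b ∈ C ∧ b ∉ C1) ∧ a ≠ b
    · -- |X| ≥ 2
      obtain ⟨a, ⟨haC, haC1⟩, b, ⟨hbC, hbC1⟩, hab⟩ := hX
      -- every G'-neighbor outside C of a vertex of X lies in C1
      have hnb : ∀ u w : V, u ∈ C → u ∉ C1 → w ∉ C → G'.Adj u w → w ∈ C1 := by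
        intro u w huC huC1 hwC hadj
        by_contra hwC1
        have hF' : s(u, w) ∉ F := fun h => hwC (hB u w h).2
        have hGadj : (G'.deleteEdges F).Adj u w := by
          rw [deleteEdges_adj]; exact ⟨hadj, hF'⟩
        exact hI1 huC1 hwC1 hadj.ne hGadj
      -- any two outside-C neighbors in C1 coincide
      have huniq : ∀ w w' : V, w ∉ C → w' ∉ C → w ∈ C1 → w' ∈ C1 → w = w' := by
        intro w w' hwC hw'C hwC1 hw'C1
        by_contra hww'
        have hGadj : (G'.deleteEdges F).Adj w w' := hC1 hwC1 hw'C1 hww'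
        rw [deleteEdges_adj] at hGadj
        exact hI hwC hw'C hww' hGadj.1
      -- some vertex of X has no neighbor outside C
      have hu : ∃ u, u ∈ C ∧ u ∉ C1 ∧ ∀ w, w ∉ C → ¬ G'.Adj u w := by
        by_contra h
        push_neg at h
        obtain ⟨w, hwC, hwadj⟩ := h a haC haC1
        have hwC1 : w ∈ C1 := hnb a w haC haC1 hwC hwadj
        -- w is adjacent to all of C
        have hall : ∀ x ∈ C, G'.Adj w x := by
          intro x hxC
          by_cases hxC1 : x ∈ C1
          · have hwx : w ≠ x := fun h => hwC (h ▸ hxC)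
            have : (G'.deleteEdges F).Adj w x := hC1 hwC1 hxC1 hwx
            rw [deleteEdges_adj] at this
            exact this.1
          · obtain ⟨w', hw'C, hw'adj⟩ := h x hxC hxC1
            have hw'C1 : w' ∈ C1 := hnb x w' hxC hxC1 hw'C hw'adj
            have : w' = w := huniq w' w hw'C hwC hw'C1 hwC1
            exact (this ▸ hw'adj).symm
        obtain ⟨x, hxC, hnadj⟩ := hmax w hwC
        exact hnadj (hall x hxC)
      obtain ⟨u, huC, huC1, hunbr⟩ := hu
      -- pick v ∈ X distinct from u
      have hv : ∃ v, v ∈ C ∧ v ∉ C1 ∧ v ≠ u := by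
        by_cases hua : u = a
        · exact ⟨b, hbC, hbC1, fun h => hab (hua ▸ h.symm)⟩
        · exact ⟨a, haC, haC1, fun h => hua h.symm⟩
      obtain ⟨v, hvC, hvC1, hvu⟩ := hv
      refine ⟨s(u, v), hXF u v huC huC1 hvC hvC1 hvu.symm, C \ {u}, ?_, ?_⟩
      · -- C \ {u} is a clique in G' − e
        intro x hx y hy hxy
        rw [deleteEdges_adj]
        refine ⟨hC hx.1 hy.1 hxy, ?_⟩
        simp only [Set.mem_singleton_iff, Sym2.eq_iff]
        rintro (⟨rfl, rfl⟩ | ⟨rfl, rfl⟩)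
        · exact hx.2 rfl
        · exact hy.2 rfl
      · -- (C \ {u})ᶜ is independent in G' − e
        intro x hx y hy hxy hadj
        rw [deleteEdges_adj] at hadj
        simp only [Set.mem_compl_iff, Set.mem_diff, Set.mem_singleton_iff, not_and,
          not_not] at hx hy
        by_cases hxC : x ∈ C
        · have hxu : x = u := hx hxC
          by_cases hyC : y ∈ C
          · exact hxy (hxu.trans (hy hyC).symm)
          · exact hunbr y hyC (hxu ▸ hadj.1)
        · by_cases hyC : y ∈ C
          · have hyu : y = u := hy hyC
            exact hunbr x hxC (hyu ▸ hadj.1.symm)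
          · exact hI hxC hyC hxy hadj.1
    · -- |X| ≤ 1 : then (C1, C1ᶜ) is also a split partition of G' − e, any e ∈ F
      push_neg at hX
      obtain ⟨e, heF⟩ := hne
      refine ⟨e, heF, C1, ?_, ?_⟩
      · intro x hx y hy hxy
        have hGadj : (G'.deleteEdges F).Adj x y := hC1 hx hy hxy
        rw [deleteEdges_adj] at hGadj
        rw [deleteEdges_adj]
        refine ⟨hGadj.1, ?_⟩
        intro h
        rw [Set.mem_singleton_iff] at h
        exact hGadj.2 (h ▸ heF)
      · intro x hx y hy hxy hadj
        rw [deleteEdges_adj] at hadj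
        by_cases hxyF : s(x, y) ∈ F
        · obtain ⟨hxC, hyC⟩ := hB x y hxyF
          exact hxy (hX x ⟨hxC, hx⟩ y ⟨hyC, hy⟩)
        · have : (G'.deleteEdges F).Adj x y := by
            rw [deleteEdges_adj]; exact ⟨hadj.1, hxyF⟩
          exact hI1 hx hy hxy this
  · -- Case A : some F-edge has an endpoint outside C; then (C, Cᶜ) still works
    push_neg at hA
    obtain ⟨e, heF, u, v, rfl, huv⟩ := hA
    refine ⟨s(u, v), heF, C, ?_, ?_⟩
    · intro x hx y hy hxy
      rw [deleteEdges_adj]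
      refine ⟨hC hx hy hxy, ?_⟩
      simp only [Set.mem_singleton_iff, Sym2.eq_iff]
      rintro (⟨rfl, rfl⟩ | ⟨rfl, rfl⟩)
      · exact huv hx hy
      · exact huv hy hx
    · intro x hx y hy hxy hadj
      rw [deleteEdges_adj] at hadj
      exact hI hx hy hxy hadj.1
end

section
/- Let G be a threshold graph. An edge e ∈ E(G) is threshold-safe (i.e., G − e is a threshold graph) if and only if e is neither the middle edge of an induced diamond of G nor a side edge of an induced paw of G. -/
open SimpleGraph

variable {V : Type*}

/-- `G` contains an induced `2K₂`. -/
def HasInduced2K2 (G : SimpleGraph V) : Prop :=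
  ∃ a b c d : V, G.Adj a b ∧ G.Adj c d ∧
    ¬ G.Adj a c ∧ ¬ G.Adj a d ∧ ¬ G.Adj b c ∧ ¬ G.Adj b d

/-- `G` contains an induced `P₄`. -/
def HasInducedP4 (G : SimpleGraph V) : Prop :=
  ∃ a b c d : V, G.Adj a b ∧ G.Adj b c ∧ G.Adj c d ∧
    ¬ G.Adj a c ∧ ¬ G.Adj a d ∧ ¬ G.Adj b d

/-- `G` contains an induced `C₄`. -/
def HasInducedC4 (G : SimpleGraph V) : Prop :=
  ∃ a b c d : V, a ≠ c ∧ b ≠ d ∧ G.Adj a b ∧ G.Adj b c ∧ G.Adj c d ∧ G.Adj d a ∧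
    ¬ G.Adj a c ∧ ¬ G.Adj b d

/-- A threshold graph: no induced `2K₂`, `P₄`, or `C₄` (the Chvátal–Hammer
characterization). -/
def IsThresholdGraph (G : SimpleGraph V) : Prop :=
  ¬ HasInduced2K2 G ∧ ¬ HasInducedP4 G ∧ ¬ HasInducedC4 G

/-- The edge `xy` is a side edge of an induced paw of `G`, where `y` is the degree-three
vertex and `x` a degree-two vertex of the paw: there are vertices `u, v` such that
`{v, y, x, u}` induces a paw with edges `vy, yx, yu, xu` and non-edges `vx, vu`. -/
def SideEdgePaw (G : SimpleGraph V) (x y : V) : Prop :=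
  ∃ u v : V, G.Adj v y ∧ G.Adj y x ∧ G.Adj y u ∧ G.Adj x u ∧ ¬ G.Adj v x ∧ ¬ G.Adj v u

/-- Let `G` be a threshold graph. An edge `xy` of `G` is threshold-safe iff it is neither the
middle edge of an induced diamond nor a side edge of an induced paw of `G`. -/
theorem stmt7 {V : Type*} [Fintype V] (G : SimpleGraph V) (hG : IsThresholdGraph G)
    (x y : V) (hxy : G.Adj x y) :
    IsThresholdGraph (G.deleteEdges {s(x, y)}) ↔
      ¬ MiddleEdgeDiamond G x y ∧ ¬ SideEdgePaw G x y ∧ ¬ SideEdgePaw G y x := by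
  have hA : ∀ a b : V, (G.deleteEdges {s(x, y)}).Adj a b ↔
      G.Adj a b ∧ ¬((a = x ∧ b = y) ∨ (a = y ∧ b = x)) := by
    intro a b
    rw [SimpleGraph.deleteEdges_adj]
    simp [Sym2.eq_iff]
  have mkAdj : ∀ {a b : V}, G.Adj a b → ¬(a = x ∧ b = y) → ¬(a = y ∧ b = x) →
      (G.deleteEdges {s(x, y)}).Adj a b :=
    fun h h1 h2 => (hA _ _).2 ⟨h, fun hor => hor.elim h1 h2⟩
  have nAdj : ∀ {a b : V}, ¬G.Adj a b → ¬(G.deleteEdges {s(x, y)}).Adj a b :=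
    fun h h' => h ((hA _ _).1 h').1
  have nxy : ¬(G.deleteEdges {s(x, y)}).Adj x y :=
    fun h => ((hA _ _).1 h).2 (Or.inl ⟨rfl, rfl⟩)
  have nyx : ¬(G.deleteEdges {s(x, y)}).Adj y x :=
    fun h => ((hA _ _).1 h).2 (Or.inr ⟨rfl, rfl⟩)
  have nEl : ∀ {p q : V}, ¬(G.deleteEdges {s(x, y)}).Adj p q →
      ¬G.Adj p q ∨ (x = p ∧ y = q) ∨ (y = p ∧ x = q) := by
    intro p q h
    by_cases hpq : G.Adj p q
    · rcases Classical.em ((x = p ∧ y = q) ∨ (y = p ∧ x = q)) with h' | h'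
      · exact Or.inr h'
      · refine absurd ((hA p q).2 ⟨hpq, ?_⟩) h
        rintro (⟨rfl, rfl⟩ | ⟨rfl, rfl⟩)
        · exact h' (Or.inl ⟨rfl, rfl⟩)
        · exact h' (Or.inr ⟨rfl, rfl⟩)
    · exact Or.inl hpq
  obtain ⟨h2, hP, hC⟩ := hG
  constructor
  · rintro ⟨h2', hP', hC'⟩
    refine ⟨?_, ?_, ?_⟩
    · rintro ⟨u, v, huv, hux, huy, hvx, hvy, hxy2, hnuv⟩
      exact hC' ⟨u, x, v, y, huv, hxy.ne,
        mkAdj hux (fun h => hux.ne h.1) (fun h => huy.ne h.1),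
        mkAdj hvx.symm (fun h => hvy.ne h.2) (fun h => hxy.ne h.1),
        mkAdj hvy (fun h => hvx.ne h.1) (fun h => hvy.ne h.1),
        mkAdj huy.symm (fun h => hxy.ne h.1.symm) (fun h => hux.ne h.2),
        nAdj hnuv, nxy⟩
    · rintro ⟨u, v, hvy, hyx, hyu, hxu, hvx, hvu⟩
      exact hP' ⟨v, y, u, x,
        mkAdj hvy (fun h => hvu (h.1 ▸ hxu)) (fun h => hvy.ne h.1),
        mkAdj hyu (fun h => hxy.ne h.1.symm) (fun h => hxu.ne h.2.symm),
        mkAdj hxu.symm (fun h => hxu.ne h.1.symm) (fun h => hyu.ne h.1.symm),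
        nAdj hvu, nAdj hvx, nyx⟩
    · rintro ⟨u, v, hvx, hxy2, hxu, hyu, hvy, hvu⟩
      exact hP' ⟨v, x, u, y,
        mkAdj hvx (fun h => hvx.ne h.1) (fun h => hvu (h.1 ▸ hyu)),
        mkAdj hxu (fun h => hyu.ne h.2.symm) (fun h => hxy.ne h.1),
        mkAdj hyu.symm (fun h => hxu.ne h.1.symm) (fun h => hyu.ne h.1.symm),
        nAdj hvu, nAdj hvy, nxy⟩
  · rintro ⟨hm, hp1, hp2⟩
    refine ⟨?_, ?_, ?_⟩
    -- no induced 2K2 in G - e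
    · rintro ⟨a, b, c, d, hab', hcd', hac', had', hbc', hbd'⟩
      obtain ⟨hab, habne⟩ := (hA a b).1 hab'
      obtain ⟨hcd, hcdne⟩ := (hA c d).1 hcd'
      rcases nEl hac' with hac | ⟨rfl, rfl⟩ | ⟨rfl, rfl⟩
      · rcases nEl had' with had | ⟨rfl, rfl⟩ | ⟨rfl, rfl⟩
        · rcases nEl hbc' with hbc | ⟨rfl, rfl⟩ | ⟨rfl, rfl⟩
          · rcases nEl hbd' with hbd | ⟨rfl, rfl⟩ | ⟨rfl, rfl⟩
            · exact h2 ⟨a, b, c, d, hab, hcd, hac, had, hbc, hbd⟩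
            · exact hP ⟨a, x, y, c, hab, hxy, hcd.symm, had, hac, hbc⟩
            · exact hP ⟨a, y, x, c, hab, hxy.symm, hcd.symm, had, hac, hbc⟩
          · rcases nEl hbd' with hbd | ⟨-, rfl⟩ | ⟨hh, -⟩
            · exact hP ⟨a, x, y, d, hab, hxy, hcd, hac, had, hbd⟩
            · exact hcd.ne rfl
            · exact hxy.ne hh.symm
          · rcases nEl hbd' with hbd | ⟨hh, -⟩ | ⟨-, rfl⟩
            · exact hP ⟨a, y, x, d, hab, hxy.symm, hcd, hac, had, hbd⟩
            · exact hxy.ne hh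
            · exact hcd.ne rfl
        · rcases nEl hbc' with hbc | ⟨rfl, -⟩ | ⟨rfl, -⟩
          · rcases nEl hbd' with hbd | ⟨rfl, -⟩ | ⟨rfl, -⟩
            · exact hP ⟨b, x, y, c, hab.symm, hxy, hcd.symm, hbd, hbc, hac⟩
            · exact hab.ne rfl
            · exact habne (Or.inl ⟨rfl, rfl⟩)
          · exact hab.ne rfl
          · exact habne (Or.inl ⟨rfl, rfl⟩)
        · rcases nEl hbc' with hbc | ⟨rfl, -⟩ | ⟨rfl, -⟩
          · rcases nEl hbd' with hbd | ⟨-, hh⟩ | ⟨rfl, -⟩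
            · exact hP ⟨b, y, x, c, hab.symm, hxy.symm, hcd.symm, hbd, hbc, hac⟩
            · exact hxy.ne hh.symm
            · exact hab.ne rfl
          · exact habne (Or.inr ⟨rfl, rfl⟩)
          · exact hab.ne rfl
      · rcases nEl had' with had | ⟨-, rfl⟩ | ⟨hh, -⟩
        · rcases nEl hbc' with hbc | ⟨rfl, -⟩ | ⟨-, hh⟩
          · rcases nEl hbd' with hbd | ⟨rfl, -⟩ | ⟨rfl, -⟩
            · exact hP ⟨b, x, y, d, hab.symm, hxy, hcd, hbc, hbd, had⟩
            · exact hab.ne rfl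
            · exact habne (Or.inl ⟨rfl, rfl⟩)
          · exact hab.ne rfl
          · exact hxy.ne hh
        · exact hcd.ne rfl
        · exact hxy.ne hh.symm
      · rcases nEl had' with had | ⟨hh, -⟩ | ⟨-, rfl⟩
        · rcases nEl hbc' with hbc | ⟨-, hh⟩ | ⟨rfl, -⟩
          · rcases nEl hbd' with hbd | ⟨rfl, -⟩ | ⟨rfl, -⟩
            · exact hP ⟨b, y, x, d, hab.symm, hxy.symm, hcd, hbc, hbd, had⟩
            · exact habne (Or.inr ⟨rfl, rfl⟩)
            · exact hab.ne rfl
          · exact hxy.ne hh.symm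
          · exact hab.ne rfl
        · exact hxy.ne hh
        · exact hcd.ne rfl
    -- no induced P4 in G - e
    · rintro ⟨a, b, c, d, hab', hbc', hcd', hac', had', hbd'⟩
      obtain ⟨hab, habne⟩ := (hA a b).1 hab'
      obtain ⟨hbc, -⟩ := (hA b c).1 hbc'
      obtain ⟨hcd, hcdne⟩ := (hA c d).1 hcd'
      rcases nEl hac' with hac | ⟨rfl, rfl⟩ | ⟨rfl, rfl⟩
      · rcases nEl had' with had | ⟨rfl, rfl⟩ | ⟨rfl, rfl⟩
        · rcases nEl hbd' with hbd | ⟨rfl, rfl⟩ | ⟨rfl, rfl⟩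
          · exact hP ⟨a, b, c, d, hab, hbc, hcd, hac, had, hbd⟩
          · exact hp2 ⟨c, a, hab, hxy, hbc, hcd.symm, had, hac⟩
          · exact hp1 ⟨c, a, hab, hxy.symm, hbc, hcd.symm, had, hac⟩
        · rcases nEl hbd' with hbd | ⟨rfl, -⟩ | ⟨rfl, -⟩
          · exact hC ⟨x, b, c, y,
              (fun h => hcdne (Or.inl ⟨h.symm, rfl⟩)),
              (fun h => habne (Or.inl ⟨rfl, h⟩)),
              hab, hbc, hcd, hxy.symm, hac, hbd⟩
          · exact hab.ne rfl
          · exact habne (Or.inl ⟨rfl, rfl⟩)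
        · rcases nEl hbd' with hbd | ⟨-, hh⟩ | ⟨rfl, -⟩
          · exact hC ⟨y, b, c, x,
              (fun h => hcdne (Or.inr ⟨h.symm, rfl⟩)),
              (fun h => habne (Or.inr ⟨rfl, h⟩)),
              hab, hbc, hcd, hxy, hac, hbd⟩
          · exact hxy.ne hh.symm
          · exact hab.ne rfl
      · rcases nEl had' with had | ⟨-, rfl⟩ | ⟨hh, -⟩
        · rcases nEl hbd' with hbd | ⟨rfl, -⟩ | ⟨rfl, -⟩
          · exact hp1 ⟨b, d, hcd.symm, hxy.symm, hbc.symm, hab, fun h => had h.symm,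
              fun h => hbd h.symm⟩
          · exact hab.ne rfl
          · exact hbc.ne rfl
        · exact hcd.ne rfl
        · exact hxy.ne hh.symm
      · rcases nEl had' with had | ⟨hh, -⟩ | ⟨-, rfl⟩
        · rcases nEl hbd' with hbd | ⟨rfl, -⟩ | ⟨rfl, -⟩
          · exact hp2 ⟨b, d, hcd.symm, hxy, hbc.symm, hab, fun h => had h.symm,
              fun h => hbd h.symm⟩
          · exact hbc.ne rfl
          · exact hab.ne rfl
        · exact hxy.ne hh
        · exact hcd.ne rfl
    -- no induced C4 in G - e
    · rintro ⟨a, b, c, d, hnac, hnbd, hab', hbc', hcd', hda', hac', hbd'⟩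
      obtain ⟨hab, -⟩ := (hA a b).1 hab'
      obtain ⟨hbc, -⟩ := (hA b c).1 hbc'
      obtain ⟨hcd, -⟩ := (hA c d).1 hcd'
      obtain ⟨hda, -⟩ := (hA d a).1 hda'
      rcases nEl hac' with hac | ⟨rfl, rfl⟩ | ⟨rfl, rfl⟩
      · rcases nEl hbd' with hbd | ⟨rfl, rfl⟩ | ⟨rfl, rfl⟩
        · exact hC ⟨a, b, c, d, hnac, hnbd, hab, hbc, hcd, hda, hac, hbd⟩
        · exact hm ⟨a, c, hnac, hab, hda.symm, hbc.symm, hcd, hxy, hac⟩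
        · exact hm ⟨a, c, hnac, hda.symm, hab, hcd, hbc.symm, hxy, hac⟩
      · rcases nEl hbd' with hbd | ⟨rfl, -⟩ | ⟨rfl, -⟩
        · exact hm ⟨b, d, hnbd, hab.symm, hbc, hda, hcd.symm, hxy, hbd⟩
        · exact hab.ne rfl
        · exact hbc.ne rfl
      · rcases nEl hbd' with hbd | ⟨rfl, -⟩ | ⟨rfl, -⟩
        · exact hm ⟨b, d, hnbd, hbc, hab.symm, hcd.symm, hda, hxy, hbd⟩
        · exact hbc.ne rfl
        · exact hab.ne rfl
end

section
/- The class of threshold graphs is degree sandwich monotone: if G′ is a threshold graph and F ⊆ E(G′) is a set of edges such that G′ − F is a threshold graph, then for every degree-minimal edge e in F, the graph G′ − e is a threshold graph. -/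
open SimpleGraph

variable {V : Type*}

/-- In a threshold graph, a conflict of four vertices is impossible
(nested neighborhoods). -/
lemma nested_aux {G : SimpleGraph V} (hG : IsThresholdGraph G)
    {x y p q : V} (hxp : G.Adj x p) (hyq : G.Adj y q) (hxq : ¬ G.Adj x q)
    (hyp : ¬ G.Adj y p) (hpy : p ≠ y) (hqx : q ≠ x) : False := by
  obtain ⟨h2, hP, hC⟩ := hG
  by_cases hxy : G.Adj x y <;> by_cases hpq : G.Adj p q
  · exact hC ⟨x, y, q, p, hqx.symm, hpy.symm, hxy, hyq, hpq.symm, hxp.symm, hxq, hyp⟩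
  · exact hP ⟨p, x, y, q, hxp.symm, hxy, hyq, fun h => hyp h.symm, hpq, hxq⟩
  · exact hP ⟨x, p, q, y, hxp, hpq, hyq.symm, hxq, hxy, fun h => hyp h.symm⟩
  · exact h2 ⟨x, p, y, q, hxp, hyq, hxy, hxq, fun h => hyp h.symm, hpq⟩

/-- Key degree lemma: if `deg a ≤ deg b` but some `w ≠ b` is adjacent to `a`
and not to `b`, a threshold graph yields a contradiction. -/
lemma key_aux [Fintype V] {G : SimpleGraph V} (hG : IsThresholdGraph G)
    {a b w : V} (hdeg : deg G a ≤ deg G b) (haw : G.Adj a w)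
    (hbw : ¬ G.Adj b w) (hwb : w ≠ b) : False := by
  classical
  have hsub : G.neighborSet b \ {a} ⊆ G.neighborSet a \ {b} := by
    rintro q ⟨hq, hqa⟩
    simp only [Set.mem_singleton_iff] at hqa
    rw [SimpleGraph.mem_neighborSet] at hq
    refine ⟨?_, ?_⟩
    · rw [SimpleGraph.mem_neighborSet]
      by_contra haq
      exact nested_aux hG haw hq haq hbw hwb hqa
    · simp only [Set.mem_singleton_iff]
      rintro rfl
      exact (G.irrefl hq)
  have hw : w ∈ G.neighborSet a \ {b} := ⟨haw, by simpa using hwb⟩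
  have hwn : w ∉ G.neighborSet b \ {a} := fun hmem => hbw hmem.1
  have hss : G.neighborSet b \ {a} ⊂ G.neighborSet a \ {b} :=
    ⟨hsub, fun hsup => hwn (hsup hw)⟩
  have hlt := Set.ncard_lt_ncard hss (Set.toFinite _)
  by_cases hab : G.Adj a b
  · have hmem1 : a ∈ G.neighborSet b := hab.symm
    have hmem2 : b ∈ G.neighborSet a := hab
    rw [Set.ncard_diff_singleton_of_mem hmem1, Set.ncard_diff_singleton_of_mem hmem2] at hlt
    have h1 : (0:ℕ) < (G.neighborSet a).ncard :=
      (Set.ncard_pos (Set.toFinite _)).mpr ⟨b, hmem2⟩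
    have h2 : (0:ℕ) < (G.neighborSet b).ncard :=
      (Set.ncard_pos (Set.toFinite _)).mpr ⟨a, hmem1⟩
    have hdeg' : (G.neighborSet a).ncard ≤ (G.neighborSet b).ncard := hdeg
    omega
  · have hmem1 : a ∉ G.neighborSet b := fun hmem => hab (hmem.symm)
    have hmem2 : b ∉ G.neighborSet a := fun hmem => hab hmem
    rw [Set.diff_singleton_eq_self hmem1, Set.diff_singleton_eq_self hmem2] at hlt
    have hdeg' : (G.neighborSet a).ncard ≤ (G.neighborSet b).ncard := hdeg
    omega

/-- The hard `P₄` case: the removed edge `uv` joins the first and third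
vertices of an induced `P₄` `u-b-v-d` of `G' - uv`. -/
lemma case13_aux [Fintype V] {G' : SimpleGraph V} (hG' : IsThresholdGraph G')
    {F : Set (Sym2 V)} (hsafe : IsThresholdGraph (G'.deleteEdges F))
    {u v b d : V} (h : DegreeMinimal G' F u v)
    (hub : G'.Adj u b) (hbv : G'.Adj b v) (hvd : G'.Adj v d)
    (hud : ¬ G'.Adj u d) (hbd : ¬ G'.Adj b d) : False := by
  obtain ⟨huvF, hmin1, hmin2⟩ := h
  have hdb : d ≠ b := by rintro rfl; exact hud hub
  by_cases h1 : s(u, b) ∈ F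
  · exact key_aux hG' (hmin2 b h1) hvd hbd hdb
  by_cases h2 : s(v, d) ∈ F
  · have hdv : s(d, v) ∈ F := by rwa [Sym2.eq_swap]
    exact key_aux hG' (hmin1 d v hdv) hub (fun hh => hbd hh.symm) hdb.symm
  by_cases h3 : s(b, v) ∈ F
  · refine hsafe.1 ⟨u, b, v, d, ?_, ?_, ?_, ?_, ?_, ?_⟩
    · exact (SimpleGraph.deleteEdges_adj).mpr ⟨hub, h1⟩
    · exact (SimpleGraph.deleteEdges_adj).mpr ⟨hvd, h2⟩
    · intro hh; exact ((SimpleGraph.deleteEdges_adj).mp hh).2 huvF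
    · intro hh; exact hud ((SimpleGraph.deleteEdges_adj).mp hh).1
    · intro hh; exact ((SimpleGraph.deleteEdges_adj).mp hh).2 h3
    · intro hh; exact hbd ((SimpleGraph.deleteEdges_adj).mp hh).1
  · refine hsafe.2.1 ⟨u, b, v, d, ?_, ?_, ?_, ?_, ?_, ?_⟩
    · exact (SimpleGraph.deleteEdges_adj).mpr ⟨hub, h1⟩
    · exact (SimpleGraph.deleteEdges_adj).mpr ⟨hbv, h3⟩
    · exact (SimpleGraph.deleteEdges_adj).mpr ⟨hvd, h2⟩
    · intro hh; exact ((SimpleGraph.deleteEdges_adj).mp hh).2 huvF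
    · intro hh; exact hud ((SimpleGraph.deleteEdges_adj).mp hh).1
    · intro hh; exact hbd ((SimpleGraph.deleteEdges_adj).mp hh).1

/-- The hard `C₄` case: the removed edge `uv` is a diagonal of an induced
`C₄` `u-b-v-d` of `G' - uv`. -/
lemma caseC4_aux [Fintype V] {G' : SimpleGraph V} (hG' : IsThresholdGraph G')
    {F : Set (Sym2 V)} (hsafe : IsThresholdGraph (G'.deleteEdges F))
    {u v b d : V} (h : DegreeMinimal G' F u v) (huv : G'.Adj u v)
    (hbdne : b ≠ d) (hub : G'.Adj u b) (hbv : G'.Adj b v) (hvd : G'.Adj v d)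
    (hdu : G'.Adj d u) (hbd : ¬ G'.Adj b d) : False := by
  obtain ⟨huvF, hmin1, hmin2⟩ := h
  by_cases h1 : s(u, b) ∈ F
  · exact key_aux hG' (hmin2 b h1) hvd hbd hbdne.symm
  by_cases h2 : s(u, d) ∈ F
  · exact key_aux hG' (hmin2 d h2) hbv.symm (fun hh => hbd hh.symm) hbdne
  by_cases h3 : s(b, v) ∈ F
  · exact key_aux hG' (hmin1 b v h3) hdu.symm hbd hbdne.symm
  by_cases h4 : s(v, d) ∈ F
  · have hdv : s(d, v) ∈ F := by rwa [Sym2.eq_swap]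
    exact key_aux hG' (hmin1 d v hdv) hub (fun hh => hbd hh.symm) hbdne
  · have h2' : s(d, u) ∉ F := by rwa [Sym2.eq_swap]
    refine hsafe.2.2 ⟨u, b, v, d, huv.ne, hbdne, ?_, ?_, ?_, ?_, ?_, ?_⟩
    · exact (SimpleGraph.deleteEdges_adj).mpr ⟨hub, h1⟩
    · exact (SimpleGraph.deleteEdges_adj).mpr ⟨hbv, h3⟩
    · exact (SimpleGraph.deleteEdges_adj).mpr ⟨hvd, h4⟩
    · exact (SimpleGraph.deleteEdges_adj).mpr ⟨hdu, h2'⟩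
    · intro hh; exact ((SimpleGraph.deleteEdges_adj).mp hh).2 huvF
    · intro hh; exact hbd ((SimpleGraph.deleteEdges_adj).mp hh).1

/-- The class of threshold graphs is degree sandwich monotone. -/
theorem stmt9 {V : Type*} [Fintype V] (G' : SimpleGraph V) (hG' : IsThresholdGraph G')
    (F : Set (Sym2 V)) (hF : F ⊆ G'.edgeSet) (hsafe : IsThresholdGraph (G'.deleteEdges F))
    (u v : V) (h : DegreeMinimal G' F u v) :
    IsThresholdGraph (G'.deleteEdges {s(u, v)}) := by
  classical
  have huv : G'.Adj u v := (G'.mem_edgeSet).mp (hF h.1)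
  set H := G'.deleteEdges {s(u, v)} with hH
  have hHadj : ∀ x y : V, H.Adj x y ↔ G'.Adj x y ∧ s(x, y) ≠ s(u, v) := by
    intro x y
    rw [hH, SimpleGraph.deleteEdges_adj]
    simp
  have hclass : ∀ x y : V, ¬ H.Adj x y → G'.Adj x y → s(x, y) = s(u, v) := by
    intro x y hn ha
    by_contra hne
    exact hn ((hHadj x y).mpr ⟨ha, hne⟩)
  -- degree minimality facts
  have hduv : deg G' u ≤ deg G' v := by
    have : s(v, u) ∈ F := by rw [Sym2.eq_swap]; exact h.1
    exact h.2.1 v u this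
  refine ⟨?_, ?_, ?_⟩
  -- no induced 2K2
  · rintro ⟨a, b, c, d, hab, hcd, hac, had, hbc, hbd⟩
    have gab := ((hHadj a b).mp hab).1
    have gcd := ((hHadj c d).mp hcd).1
    have hnab : a ≠ b := gab.ne
    have hncd : c ≠ d := gcd.ne
    have hnac : a ≠ c := by rintro rfl; exact had hcd
    have hnad : a ≠ d := by rintro rfl; exact hac hcd.symm
    have hnbc : b ≠ c := by rintro rfl; exact hbd hcd
    have hnbd : b ≠ d := by rintro rfl; exact hbc hcd.symm
    by_cases gac : G'.Adj a c
    · have e1 := hclass a c hac gac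
      have gad : ¬ G'.Adj a d := by
        intro hh
        have e2 := (hclass a d had hh).trans e1.symm
        rcases Sym2.eq_iff.mp e2 with ⟨-, h'⟩ | ⟨h', -⟩
        · exact hncd h'.symm
        · exact hnac h'
      have gbc : ¬ G'.Adj b c := by
        intro hh
        have e2 := (hclass b c hbc hh).trans e1.symm
        rcases Sym2.eq_iff.mp e2 with ⟨h', -⟩ | ⟨h', h''⟩
        · exact hnab h'.symm
        · exact hnbc h'
      have gbd : ¬ G'.Adj b d := by
        intro hh
        have e2 := (hclass b d hbd hh).trans e1.symm
        rcases Sym2.eq_iff.mp e2 with ⟨h', -⟩ | ⟨h', -⟩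
        · exact hnab h'.symm
        · exact hnbc h'
      exact hG'.2.1 ⟨b, a, c, d, gab.symm, gac, gcd, gbc, gbd, gad⟩
    · by_cases gad : G'.Adj a d
      · have e1 := hclass a d had gad
        have gbc : ¬ G'.Adj b c := by
          intro hh
          have e2 := (hclass b c hbc hh).trans e1.symm
          rcases Sym2.eq_iff.mp e2 with ⟨h', -⟩ | ⟨-, h''⟩
          · exact hnab h'.symm
          · exact hnac h''.symm
        have gbd : ¬ G'.Adj b d := by
          intro hh
          have e2 := (hclass b d hbd hh).trans e1.symm
          rcases Sym2.eq_iff.mp e2 with ⟨h', -⟩ | ⟨h', -⟩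
          · exact hnab h'.symm
          · exact hnbd h'
        exact hG'.2.1 ⟨b, a, d, c, gab.symm, gad, gcd.symm, gbd, gbc, gac⟩
      · by_cases gbc : G'.Adj b c
        · have e1 := hclass b c hbc gbc
          have gbd : ¬ G'.Adj b d := by
            intro hh
            have e2 := (hclass b d hbd hh).trans e1.symm
            rcases Sym2.eq_iff.mp e2 with ⟨-, h'⟩ | ⟨h', -⟩
            · exact hncd h'.symm
            · exact hnbc h'
          exact hG'.2.1 ⟨a, b, c, d, gab, gbc, gcd, gac, gad, gbd⟩
        · by_cases gbd : G'.Adj b d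
          · exact hG'.2.1 ⟨a, b, d, c, gab, gbd, gcd.symm, gad, gac, gbc⟩
          · exact hG'.1 ⟨a, b, c, d, gab, gcd, gac, gad, gbc, gbd⟩
  -- no induced P4
  · rintro ⟨a, b, c, d, hab, hbc, hcd, hac, had, hbd⟩
    have gab := ((hHadj a b).mp hab).1
    have gbc := ((hHadj b c).mp hbc).1
    have gcd := ((hHadj c d).mp hcd).1
    have hnab : a ≠ b := gab.ne
    have hnbc : b ≠ c := gbc.ne
    have hncd : c ≠ d := gcd.ne
    have hnac : a ≠ c := by rintro rfl; exact had hcd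
    have hnad : a ≠ d := by rintro rfl; exact hac hcd.symm
    have hnbd : b ≠ d := by rintro rfl; exact had hab
    by_cases gac : G'.Adj a c
    · have e1 := hclass a c hac gac
      have gad : ¬ G'.Adj a d := by
        intro hh
        have e2 := (hclass a d had hh).trans e1.symm
        rcases Sym2.eq_iff.mp e2 with ⟨-, h'⟩ | ⟨h', -⟩
        · exact hncd h'.symm
        · exact hnac h'
      have gbd : ¬ G'.Adj b d := by
        intro hh
        have e2 := (hclass b d hbd hh).trans e1.symm
        rcases Sym2.eq_iff.mp e2 with ⟨h', -⟩ | ⟨h', -⟩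
        · exact hnab h'.symm
        · exact hnbc h'
      rcases Sym2.eq_iff.mp e1 with ⟨rfl, rfl⟩ | ⟨rfl, rfl⟩
      · -- u = a, v = c : path u-b-v-d
        exact case13_aux hG' hsafe h gab gbc gcd gad gbd
      · -- a = v, c = u : witness d adjacent to u, not to v
        have hdnv : d ≠ a := hnad.symm
        exact key_aux hG' hduv gcd gad hdnv
    · by_cases gad : G'.Adj a d
      · have gbd : ¬ G'.Adj b d := by
          intro hh
          have e2 := (hclass b d hbd hh).trans (hclass a d had gad).symm
          rcases Sym2.eq_iff.mp e2 with ⟨h', -⟩ | ⟨h', -⟩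
          · exact hnab h'.symm
          · exact hnbd h'
        exact hG'.2.2 ⟨a, b, c, d, hnac, hnbd, gab, gbc, gcd, gad.symm, gac, gbd⟩
      · by_cases gbd : G'.Adj b d
        · have e1 := hclass b d hbd gbd
          rcases Sym2.eq_iff.mp e1 with ⟨rfl, rfl⟩ | ⟨rfl, rfl⟩
          · -- u = b, v = d : witness a adjacent to u, not to v
            exact key_aux hG' hduv gab.symm
              (by intro hh; first | exact gad hh | exact gad hh.symm) hnad
          · -- b = v, d = u : path u-c-v-a
            exact case13_aux hG' hsafe h gcd.symm gbc.symm gab.symm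
              (by intro hh; first | exact gad hh | exact gad hh.symm)
              (by intro hh; first | exact gac hh | exact gac hh.symm)
        · exact hG'.2.1 ⟨a, b, c, d, gab, gbc, gcd, gac, gad, gbd⟩
  -- no induced C4
  · rintro ⟨a, b, c, d, hnac, hnbd, hab, hbc, hcd, hda, hac, hbd⟩
    have gab := ((hHadj a b).mp hab).1
    have gbc := ((hHadj b c).mp hbc).1
    have gcd := ((hHadj c d).mp hcd).1
    have gda := ((hHadj d a).mp hda).1
    have hnab : a ≠ b := gab.ne
    have hncd : c ≠ d := gcd.ne
    by_cases gac : G'.Adj a c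
    · have e1 := hclass a c hac gac
      have gbd : ¬ G'.Adj b d := by
        intro hh
        have e2 := (hclass b d hbd hh).trans e1.symm
        rcases Sym2.eq_iff.mp e2 with ⟨h', -⟩ | ⟨h', -⟩
        · exact hnab h'.symm
        · exact gbc.ne h'
      rcases Sym2.eq_iff.mp e1 with ⟨rfl, rfl⟩ | ⟨rfl, rfl⟩
      · exact caseC4_aux hG' hsafe h huv hnbd gab gbc gcd gda gbd
      · exact caseC4_aux hG' hsafe h huv hnbd gbc.symm gab.symm gda.symm gcd.symm gbd
    · by_cases gbd : G'.Adj b d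
      · have e1 := hclass b d hbd gbd
        rcases Sym2.eq_iff.mp e1 with ⟨rfl, rfl⟩ | ⟨rfl, rfl⟩
        · exact caseC4_aux hG' hsafe h huv hnac.symm gbc gcd gda gab
            (fun hh => gac hh.symm)
        · exact caseC4_aux hG' hsafe h huv hnac gda gab gbc gcd gac
      · exact hG'.2.2 ⟨a, b, c, d, hnac, hnbd, gab, gbc, gcd, gda, gac, gbd⟩
end

section
/- The class of threshold graphs is sandwich monotone: if G′ is a threshold graph and F ⊆ E(G′) is a nonempty set of edges such that G′ − F is a threshold graph, then there exists an edge e ∈ F such that G′ − e is a threshold graph. -/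
open SimpleGraph

variable {V : Type*}

/-- The vicinal preorder: every neighbor of `a` (other than `b`) is a neighbor of `b`. -/
def NbrLE (G : SimpleGraph V) (a b : V) : Prop :=
  ∀ x, x ≠ b → G.Adj a x → G.Adj b x

/-- In a threshold graph, the vicinal preorder is total. -/
lemma nested_of_threshold {G : SimpleGraph V} (h : IsThresholdGraph G) (u v : V) :
    NbrLE G u v ∨ NbrLE G v u := by
  by_contra hc
  rw [not_or] at hc
  obtain ⟨hc1, hc2⟩ := hc
  unfold NbrLE at hc1 hc2
  push_neg at hc1 hc2
  obtain ⟨x, hxv, hux, hnvx⟩ := hc1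
  obtain ⟨y, hyu, hvy, hnuy⟩ := hc2
  obtain ⟨h2, hP, hC⟩ := h
  have hxy : x ≠ y := by rintro rfl; exact hnvx hvy
  by_cases huv : G.Adj u v <;> by_cases hxy2 : G.Adj x y
  · -- C4 : u-x-y-v-u
    exact hC ⟨u, x, y, v, Ne.symm hyu, hxv, hux, hxy2, hvy.symm, huv.symm,
      hnuy, fun h => hnvx h.symm⟩
  · -- P4 : x-u-v-y
    exact hP ⟨x, u, v, y, hux.symm, huv, hvy, fun h => hnvx h.symm, hxy2, hnuy⟩
  · -- P4 : u-x-y-v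
    exact hP ⟨u, x, y, v, hux, hxy2, hvy.symm, hnuy, huv, fun h => hnvx h.symm⟩
  · -- 2K2 : ux, vy
    exact h2 ⟨u, x, v, y, hux, hvy, huv, hnuy, fun h => hnvx h.symm, hxy2⟩

/-- If the vicinal preorder is total, the graph is threshold. -/
lemma threshold_of_nested {G : SimpleGraph V}
    (h : ∀ a b, NbrLE G a b ∨ NbrLE G b a) : IsThresholdGraph G := by
  refine ⟨?_, ?_, ?_⟩
  · rintro ⟨a, b, c, d, hab, hcd, hac, had, hbc, hbd⟩
    have hbne : b ≠ c := by rintro rfl; exact hac hab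
    have hdne : d ≠ a := by rintro rfl; exact hac hcd.symm
    rcases h a c with h1 | h1
    · exact hbc (h1 b hbne hab).symm
    · exact had (h1 d hdne hcd)
  · rintro ⟨a, b, c, d, hab, hbc, hcd, hac, had, hbd⟩
    have hane : a ≠ c := by rintro rfl; exact had hcd
    have hdne : d ≠ b := by rintro rfl; exact had hab
    rcases h b c with h1 | h1
    · exact hac (h1 a hane hab.symm).symm
    · exact hbd (h1 d hdne hcd)
  · rintro ⟨a, b, c, d, hac, hbd, hab, hbc, hcd, hda, hnac, hnbd⟩
    rcases h a b with h1 | h1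
    · exact hnbd (h1 d hbd.symm hda.symm)
    · exact hnac (h1 c hac.symm hbc)

/-- `NbrLE` implies a degree inequality. -/
lemma card_le_of_nbrLE [Fintype V] {G : SimpleGraph V} {a b : V} (h : NbrLE G a b) :
    (G.neighborSet a).ncard ≤ (G.neighborSet b).ncard := by
  have hsub : G.neighborSet a \ {b} ⊆ G.neighborSet b \ {a} := by
    rintro z ⟨hz, hzb⟩
    exact ⟨h z hzb hz, fun hh => G.irrefl (hh ▸ hz)⟩
  have hcard := Set.ncard_le_ncard hsub (Set.toFinite _)
  by_cases hadj : G.Adj a b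
  · rw [Set.ncard_diff_singleton_of_mem ((G.mem_neighborSet a b).mpr hadj),
      Set.ncard_diff_singleton_of_mem ((G.mem_neighborSet b a).mpr hadj.symm)] at hcard
    have h1 : 0 < (G.neighborSet a).ncard :=
      (Set.ncard_pos (Set.toFinite _)).mpr ⟨b, hadj⟩
    have h2 : 0 < (G.neighborSet b).ncard :=
      (Set.ncard_pos (Set.toFinite _)).mpr ⟨a, hadj.symm⟩
    omega
  · have e1 : G.neighborSet a \ {b} = G.neighborSet a :=
      Set.diff_singleton_eq_self (fun hh => hadj hh)
    have e2 : G.neighborSet b \ {a} = G.neighborSet b :=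
      Set.diff_singleton_eq_self (fun hh => hadj (G.adj_symm hh))
    rwa [e1, e2] at hcard

/-- `NbrLE` together with the reverse degree inequality reverses. -/
lemma nbrLE_of_card [Fintype V] {G : SimpleGraph V} {a b : V} (h : NbrLE G a b)
    (hc : (G.neighborSet b).ncard ≤ (G.neighborSet a).ncard) : NbrLE G b a := by
  have hsub : G.neighborSet a \ {b} ⊆ G.neighborSet b \ {a} := by
    rintro z ⟨hz, hzb⟩
    exact ⟨h z hzb hz, fun hh => G.irrefl (hh ▸ hz)⟩
  have hcard : (G.neighborSet b \ {a}).ncard ≤ (G.neighborSet a \ {b}).ncard := by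
    by_cases hadj : G.Adj a b
    · rw [Set.ncard_diff_singleton_of_mem ((G.mem_neighborSet a b).mpr hadj),
        Set.ncard_diff_singleton_of_mem ((G.mem_neighborSet b a).mpr hadj.symm)]
      omega
    · have e1 : G.neighborSet a \ {b} = G.neighborSet a :=
        Set.diff_singleton_eq_self (fun hh => hadj hh)
      have e2 : G.neighborSet b \ {a} = G.neighborSet b :=
        Set.diff_singleton_eq_self (fun hh => hadj (G.adj_symm hh))
      rw [e1, e2]; exact hc
  have heq := Set.eq_of_subset_of_ncard_le hsub hcard (Set.toFinite _)
  intro z hza hbz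
  have hmem : z ∈ G.neighborSet b \ {a} := ⟨hbz, fun hh => hza hh⟩
  rw [← heq] at hmem
  exact hmem.1

/-- Key lemma: for a minimum-degree-sum edge `s(u,v)` of `F`, every `G'`-neighbor of `v`
dominates `u` in the vicinal preorder of `G'`. -/
lemma crit_half [Fintype V] {G' : SimpleGraph V} {F : Set (Sym2 V)}
    (hN' : ∀ a b, NbrLE G' a b ∨ NbrLE G' b a)
    (hN : ∀ a b, NbrLE (G'.deleteEdges F) a b ∨ NbrLE (G'.deleteEdges F) b a)
    {u v : V} (huvF : s(u, v) ∈ F) (huv : G'.Adj u v)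
    (hmin : ∀ a b : V, s(a, b) ∈ F →
      (G'.neighborSet u).ncard + (G'.neighborSet v).ncard ≤
      (G'.neighborSet a).ncard + (G'.neighborSet b).ncard)
    {x : V} (hadj : G'.Adj v x) : NbrLE G' u x := by
  set G := G'.deleteEdges F with hG
  by_contra hc
  have hxu : NbrLE G' x u := (hN' u x).resolve_left hc
  unfold NbrLE at hc
  push_neg at hc
  obtain ⟨y, hyx, huy, hnxy⟩ := hc
  have hdlt : (G'.neighborSet x).ncard < (G'.neighborSet u).ncard := by
    rcases lt_or_ge (G'.neighborSet x).ncard (G'.neighborSet u).ncard with h | h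
    · exact h
    · exact absurd ((nbrLE_of_card hxu h) y hyx huy) hnxy
  -- the edge xv survives in G
  have hxvF : s(x, v) ∉ F := fun hmem => by have := hmin x v hmem; omega
  have hGxv : G.Adj x v := by
    rw [hG, SimpleGraph.deleteEdges_adj]; exact ⟨hadj.symm, hxvF⟩
  have hGuv : ¬ G.Adj u v := by
    rw [hG, SimpleGraph.deleteEdges_adj]; rintro ⟨-, hh⟩; exact hh huvF
  -- in G, u's neighborhood is inside x's
  have hGux : NbrLE G u x := by
    refine (hN x u).resolve_left (fun hh => ?_)
    exact hGuv (hh v huv.ne' hGxv)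
  -- so the edge uy must be in F
  have huyF : s(u, y) ∈ F := by
    by_contra hmem
    have hGuy : G.Adj u y := by
      rw [hG, SimpleGraph.deleteEdges_adj]; exact ⟨huy, hmem⟩
    exact hnxy (SimpleGraph.deleteEdges_adj.mp (hGux y hyx hGuy)).1
  have hdvy : (G'.neighborSet v).ncard ≤ (G'.neighborSet y).ncard := by
    have := hmin u y huyF; omega
  have hvy : NbrLE G' v y := by
    rcases hN' v y with h | h
    · exact h
    · exact nbrLE_of_card h hdvy
  exact hnxy (hvy x (fun hh => hyx hh.symm) hadj).symm

/-- One half of the nestedness of `G' − {s(u,v)}`. -/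
lemma nbrLE_delete_half {G' : SimpleGraph V}
    (hN' : ∀ a b, NbrLE G' a b ∨ NbrLE G' b a) (u v : V)
    (hu : ∀ x, G'.Adj v x → NbrLE G' u x) (b : V) :
    NbrLE (G'.deleteEdges {s(u, v)}) u b ∨ NbrLE (G'.deleteEdges {s(u, v)}) b u := by
  set H := G'.deleteEdges {s(u, v)} with hH
  have hHadj : ∀ a c : V, H.Adj a c ↔ G'.Adj a c ∧ ¬ (s(a, c) = s(u, v)) := by
    intro a c
    rw [hH, SimpleGraph.deleteEdges_adj, Set.mem_singleton_iff]
  by_cases hbv : G'.Adj v b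
  · -- criterion gives NbrLE G' u b
    have hub := hu b hbv
    left
    intro x hxb hHux
    obtain ⟨h1, h1ne⟩ := (hHadj u x).mp hHux
    have h2 := hub x hxb h1
    refine (hHadj b x).mpr ⟨h2, fun heq => ?_⟩
    rcases Sym2.eq_iff.mp heq with ⟨rfl, rfl⟩ | ⟨rfl, rfl⟩
    · exact h1ne rfl
    · exact G'.irrefl hbv
  · rcases hN' u b with h | h
    · left
      intro x hxb hHux
      obtain ⟨h1, -⟩ := (hHadj u x).mp hHux
      have h2 := h x hxb h1
      refine (hHadj b x).mpr ⟨h2, fun heq => ?_⟩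
      rcases Sym2.eq_iff.mp heq with ⟨rfl, rfl⟩ | ⟨rfl, rfl⟩
      · exact hbv h2.symm
      · exact G'.irrefl h1
    · right
      intro x hxu hHbx
      obtain ⟨h1, -⟩ := (hHadj b x).mp hHbx
      have hxv : x ≠ v := fun hh => hbv (hh ▸ h1).symm
      have h2 := h x hxu h1
      refine (hHadj u x).mpr ⟨h2, fun heq => ?_⟩
      rcases Sym2.eq_iff.mp heq with ⟨-, rfl⟩ | ⟨rfl, rfl⟩
      · exact hxv rfl
      · exact hxu rfl

/-- The class of threshold graphs is sandwich monotone. -/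
theorem stmt10 {V : Type*} [Fintype V] (G' : SimpleGraph V) (hG' : IsThresholdGraph G')
    (F : Set (Sym2 V)) (hF : F ⊆ G'.edgeSet) (hne : F.Nonempty)
    (hsafe : IsThresholdGraph (G'.deleteEdges F)) :
    ∃ e ∈ F, IsThresholdGraph (G'.deleteEdges {e}) := by
  classical
  have hN' : ∀ a b, NbrLE G' a b ∨ NbrLE G' b a := fun a b => nested_of_threshold hG' a b
  have hN : ∀ a b, NbrLE (G'.deleteEdges F) a b ∨ NbrLE (G'.deleteEdges F) b a :=
    fun a b => nested_of_threshold hsafe a b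
  obtain ⟨e, heF, hemin⟩ := Set.exists_min_image F
    (Sym2.lift ⟨fun a b => (G'.neighborSet a).ncard + (G'.neighborSet b).ncard,
      fun a b => Nat.add_comm _ _⟩) (Set.toFinite F) hne
  refine ⟨e, heF, ?_⟩
  revert heF hemin
  induction e using Sym2.ind with
  | _ u v =>
    intro heF hemin
    have huv : G'.Adj u v := (G'.mem_edgeSet).mp (hF heF)
    have hmin : ∀ a b : V, s(a, b) ∈ F →
        (G'.neighborSet u).ncard + (G'.neighborSet v).ncard ≤
        (G'.neighborSet a).ncard + (G'.neighborSet b).ncard := by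
      intro a b hab
      have := hemin _ hab
      simpa only [Sym2.lift_mk] using this
    have hu : ∀ x, G'.Adj v x → NbrLE G' u x := fun x hx =>
      crit_half hN' hN heF huv hmin hx
    have heF' : s(v, u) ∈ F := by rwa [Sym2.eq_swap]
    have hv : ∀ x, G'.Adj u x → NbrLE G' v x := by
      intro x hx
      refine crit_half hN' hN heF' huv.symm ?_ hx
      intro a b hab
      have := hmin a b hab
      omega
    apply threshold_of_nested
    intro a b
    by_cases hau : a = u
    · rw [hau]; exact nbrLE_delete_half hN' u v hu b
    by_cases hav : a = v
    · rw [hav]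
      have := nbrLE_delete_half hN' v u hv b
      rwa [Sym2.eq_swap] at this
    by_cases hbu : b = u
    · rw [hbu]; exact (nbrLE_delete_half hN' u v hu a).symm
    by_cases hbv : b = v
    · rw [hbv]
      have := (nbrLE_delete_half hN' v u hv a).symm
      rwa [Sym2.eq_swap] at this
    -- neither a nor b is u or v: adjacency unchanged
    have hHadj : ∀ c x : V, c ≠ u → c ≠ v →
        ((G'.deleteEdges {s(u, v)}).Adj c x ↔ G'.Adj c x) := by
      intro c x hcu hcv
      rw [SimpleGraph.deleteEdges_adj, Set.mem_singleton_iff]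
      constructor
      · exact fun h => h.1
      · intro h
        refine ⟨h, fun heq => ?_⟩
        rcases Sym2.eq_iff.mp heq with ⟨rfl, -⟩ | ⟨rfl, -⟩
        · exact hcu rfl
        · exact hcv rfl
    rcases hN' a b with h | h
    · left
      intro x hxb hax
      exact (hHadj b x hbu hbv).mpr (h x hxb ((hHadj a x hau hav).mp hax))
    · right
      intro x hxa hbx
      exact (hHadj a x hau hav).mpr (h x hxa ((hHadj b x hbu hbv).mp hbx))
end

section
/- Let G be a chain graph. An edge e ∈ E(G) is chain-safe (i.e., G − e is a chain graph) if and only if e is not the middle edge of an induced P4 of G. -/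
open SimpleGraph

variable {V : Type*}

/-- A chain graph: a bipartite graph whose vertex set can be partitioned into two
independent sets `X` and `Y` such that the neighborhoods of the vertices of `X` are linearly
ordered by set inclusion. -/
def IsChainGraph (G : SimpleGraph V) : Prop :=
  ∃ X Y : Set V, X ∪ Y = Set.univ ∧ X ∩ Y = ∅ ∧
    (X.Pairwise fun u v => ¬ G.Adj u v) ∧ (Y.Pairwise fun u v => ¬ G.Adj u v) ∧
    ∀ u ∈ X, ∀ v ∈ X, G.neighborSet u ⊆ G.neighborSet v ∨ G.neighborSet v ⊆ G.neighborSet u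

private lemma del_adj (G : SimpleGraph V) (x y a b : V) :
    (G.deleteEdges {s(x, y)}).Adj a b ↔
      G.Adj a b ∧ ¬(a = x ∧ b = y) ∧ ¬(a = y ∧ b = x) := by
  rw [SimpleGraph.deleteEdges_adj]
  simp only [Set.mem_singleton_iff, Sym2.eq_iff]
  tauto

private lemma mid_symm {G : SimpleGraph V} {x y : V} (h : MiddleEdgeP4 G x y) :
    MiddleEdgeP4 G y x := by
  obtain ⟨u, v, h1, h2, h3, h4, h5, h6⟩ := h
  exact ⟨v, u, h3.symm, h2.symm, h1.symm, fun h => h5 h.symm, fun h => h4 h.symm,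
    fun h => h6 h.symm⟩

private lemma aux_back (G : SimpleGraph V) (X Y : Set V)
    (hU : X ∪ Y = Set.univ) (hD : X ∩ Y = ∅)
    (hX : X.Pairwise fun u v => ¬ G.Adj u v) (hY : Y.Pairwise fun u v => ¬ G.Adj u v)
    (hC : ∀ u ∈ X, ∀ v ∈ X,
      G.neighborSet u ⊆ G.neighborSet v ∨ G.neighborSet v ⊆ G.neighborSet u)
    (x y : V) (hx : x ∈ X) (hy : y ∈ Y) (hxy : G.Adj x y)
    (hmid : ¬ MiddleEdgeP4 G x y) :
    IsChainGraph (G.deleteEdges {s(x, y)}) := by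
  have memXY : ∀ a, a ∈ X ∨ a ∈ Y := fun a => by
    have : a ∈ X ∪ Y := hU ▸ Set.mem_univ a
    exact this
  have hXny : ∀ a ∈ X, a ≠ y := by
    rintro a ha rfl
    exact absurd (hD ▸ Set.mem_inter ha hy) (Set.notMem_empty a)
  have hNs : ∀ a ∈ X, a ≠ x →
      (G.deleteEdges {s(x, y)}).neighborSet a = G.neighborSet a := by
    intro a ha hax
    ext w
    simp only [mem_neighborSet, del_adj, hax, hXny a ha, false_and, not_false_iff, and_true]
  have hNx : (G.deleteEdges {s(x, y)}).neighborSet x = G.neighborSet x \ {y} := by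
    ext w
    constructor
    · intro hw
      have h := (del_adj G x y x w).1 hw
      exact ⟨h.1, fun e => h.2.1 ⟨rfl, e⟩⟩
    · intro hw
      exact (del_adj G x y x w).2 ⟨hw.1, fun e => hw.2 e.2, fun e => hxy.ne e.1⟩
  refine ⟨X, Y, hU, hD, ?_, ?_, ?_⟩
  · exact fun a ha b hb hab h => hX ha hb hab ((del_adj G x y a b).1 h).1
  · exact fun a ha b hb hab h => hY ha hb hab ((del_adj G x y a b).1 h).1
  · intro u hu v hv
    by_cases hux : u = x
    · by_cases hvx : v = x
      · rw [hux, hvx]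
        exact Or.inl (subset_refl _)
      · rw [hux, hNx, hNs v hv hvx]
        rcases hC x hx v hv with hsub | hsub
        · exact Or.inl fun w hw => hsub hw.1
        · by_cases hvy : G.Adj v y
          · refine Or.inl fun w hw => ?_
            by_contra hwv
            have hwx : G.Adj x w := hw.1
            have hwy : w ≠ y := hw.2
            have hwX : w ∉ X := fun hwX => hX hx hwX hwx.ne hwx
            have hwY : w ∈ Y := (memXY w).resolve_left hwX
            exact hmid ⟨w, v, hwx.symm, hxy, hvy.symm, hY hwY hy hwy,
              hX hx hv (fun e => hvx e.symm), fun h => hwv h.symm⟩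
          · refine Or.inr fun w hw => ⟨hsub hw, ?_⟩
            rintro rfl
            exact hvy hw
    · by_cases hvx : v = x
      · rw [hvx, hNx, hNs u hu hux]
        rcases hC x hx u hu with hsub | hsub
        · exact Or.inr fun w hw => hsub hw.1
        · by_cases huy : G.Adj u y
          · refine Or.inr fun w hw => ?_
            by_contra hwu
            have hwx : G.Adj x w := hw.1
            have hwy : w ≠ y := hw.2
            have hwX : w ∉ X := fun hwX => hX hx hwX hwx.ne hwx
            have hwY : w ∈ Y := (memXY w).resolve_left hwX
            exact hmid ⟨w, u, hwx.symm, hxy, huy.symm, hY hwY hy hwy,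
              hX hx hu (fun e => hux e.symm), fun h => hwu h.symm⟩
          · refine Or.inl fun w hw => ⟨hsub hw, ?_⟩
            rintro rfl
            exact huy hw
      · rw [hNs u hu hux, hNs v hv hvx]
        exact hC u hu v hv

/-- Let `G` be a chain graph. An edge `xy` of `G` is chain-safe iff it is not the middle edge
of an induced `P₄` of `G`. -/
theorem stmt11 {V : Type*} [Fintype V] (G : SimpleGraph V) (hG : IsChainGraph G)
    (x y : V) (hxy : G.Adj x y) :
    IsChainGraph (G.deleteEdges {s(x, y)}) ↔ ¬ MiddleEdgeP4 G x y := by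
  constructor
  · rintro ⟨X, Y, hU, hD, hX, hY, hC⟩ ⟨u, v, h1, h2, h3, h4, h5, h6⟩
    have huy : u ≠ y := by rintro rfl; exact h6 h3
    have hvx : v ≠ x := by rintro rfl; exact h6 h1
    have memXY : ∀ a, a ∈ X ∨ a ∈ Y := fun a => by
      have : a ∈ X ∪ Y := hU ▸ Set.mem_univ a
      exact this
    have hux' : (G.deleteEdges {s(x, y)}).Adj u x :=
      (del_adj G x y u x).2 ⟨h1, fun h => h2.ne h.2, fun h => huy h.1⟩
    have hyv' : (G.deleteEdges {s(x, y)}).Adj y v :=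
      (del_adj G x y y v).2 ⟨h3, fun h => h2.ne h.1.symm, fun h => hvx h.2⟩
    have hnxy' : ¬ (G.deleteEdges {s(x, y)}).Adj x y :=
      fun h => ((del_adj G x y x y).1 h).2.1 ⟨rfl, rfl⟩
    have hnyu' : ¬ (G.deleteEdges {s(x, y)}).Adj y u :=
      fun h => h4 ((del_adj G x y y u).1 h).1.symm
    have hnxv' : ¬ (G.deleteEdges {s(x, y)}).Adj x v :=
      fun h => h5 ((del_adj G x y x v).1 h).1
    have hnvu' : ¬ (G.deleteEdges {s(x, y)}).Adj v u :=
      fun h => h6 ((del_adj G x y v u).1 h).1.symm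
    have hnuv' : ¬ (G.deleteEdges {s(x, y)}).Adj u v :=
      fun h => h6 ((del_adj G x y u v).1 h).1
    have hnuy' : ¬ (G.deleteEdges {s(x, y)}).Adj u y :=
      fun h => h4 ((del_adj G x y u y).1 h).1
    have key : ∀ a ∈ X, ∀ b ∈ X, ∀ p q : V,
        (G.deleteEdges {s(x, y)}).Adj a p → ¬ (G.deleteEdges {s(x, y)}).Adj b p →
        (G.deleteEdges {s(x, y)}).Adj b q → ¬ (G.deleteEdges {s(x, y)}).Adj a q → False := by
      intro a ha b hb p q k1 k2 k3 k4
      rcases hC a ha b hb with h | h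
      · exact k2 (h k1)
      · exact k4 (h k3)
    rcases memXY x with hxX | hxY
    · rcases memXY y with hyX | hyY
      · exact key x hxX y hyX u v hux'.symm hnyu' hyv' hnxv'
      · have hvX : v ∈ X := (memXY v).resolve_right fun hv => hY hyY hv h3.ne hyv'
        exact key x hxX v hvX u y hux'.symm hnvu' hyv'.symm hnxy'
    · have huX : u ∈ X := (memXY u).resolve_right fun hu => hY hu hxY h1.ne hux'
      rcases memXY y with hyX | hyY
      · exact key u huX y hyX x v hux' (fun h => hnxy' h.symm) hyv' hnuv'
      · have hvX : v ∈ X := (memXY v).resolve_right fun hv => hY hyY hv h3.ne hyv'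
        exact key u huX v hvX x y hux' (fun h => hnxv' h.symm) hyv'.symm hnuy'
  · intro hmid
    obtain ⟨X, Y, hU, hD, hX, hY, hC⟩ := hG
    have memXY : ∀ a, a ∈ X ∨ a ∈ Y := fun a => by
      have : a ∈ X ∪ Y := hU ▸ Set.mem_univ a
      exact this
    rcases memXY x with hxX | hxY
    · have hyY : y ∈ Y := (memXY y).resolve_left fun hy => hX hxX hy hxy.ne hxy
      exact aux_back G X Y hU hD hX hY hC x y hxX hyY hxy hmid
    · have hyX : y ∈ X := (memXY y).resolve_right fun hy => hY hy hxY hxy.ne.symm hxy.symm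
      have h := aux_back G X Y hU hD hX hY hC y x hyX hxY hxy.symm
        (fun h => hmid (mid_symm h))
      simpa [Sym2.eq_swap] using h
end

section
/- A finite simple graph G is a chain graph if and only if G has a chain partition, i.e., an ordered partition (A₁, B₁, …, A_k, B_k, I) of V(G) where I is the (possibly empty) set of isolated vertices of G, the sets A_i and B_i are nonempty for all 1 ≤ i ≤ k, and two vertices x, y are adjacent in G if and only if x ∈ A_i and y ∈ B_j (or vice versa) with i ≤ j. -/
open SimpleGraph

variable {V : Type*}

/-- `(A₁, B₁, …, A_k, B_k, I)` is a chain partition of `G`: an ordered partition of `V(G)`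
where `I` is the set of isolated vertices of `G`, the sets `A i` and `B i` are nonempty,
and two vertices are adjacent iff one lies in some `A i` and the other in some `B j` with
`i ≤ j`. -/
def IsChainPartition (G : SimpleGraph V) (k : ℕ) (A B : Fin k → Set V) (I : Set V) : Prop :=
  (∀ i, (A i).Nonempty) ∧ (∀ i, (B i).Nonempty) ∧
  I = {v : V | ∀ w, ¬ G.Adj v w} ∧
  ((⋃ i, A i) ∪ (⋃ i, B i) ∪ I = Set.univ) ∧
  (∀ i j, i ≠ j → A i ∩ A j = ∅) ∧
  (∀ i j, i ≠ j → B i ∩ B j = ∅) ∧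
  (∀ i j, A i ∩ B j = ∅) ∧
  (∀ i, A i ∩ I = ∅) ∧ (∀ i, B i ∩ I = ∅) ∧
  ∀ x y : V, G.Adj x y ↔ ∃ i j : Fin k, i ≤ j ∧ ((x ∈ A i ∧ y ∈ B j) ∨ (y ∈ A i ∧ x ∈ B j))

private lemma back_aux {V : Type*} (G : SimpleGraph V) {k : ℕ} {A B : Fin k → Set V} {I : Set V}
    (h : IsChainPartition G k A B I) : IsChainGraph G := by
  obtain ⟨hA, hB, hI, hcov, hAA, hBB, hAB, hAI, hBI, hadj⟩ := h
  refine ⟨(⋃ i, A i) ∪ I, ⋃ i, B i, ?_, ?_, ?_, ?_, ?_⟩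
  · rw [← hcov]; ext v; simp [or_assoc]; tauto
  · ext v; simp only [Set.mem_inter_iff, Set.mem_union, Set.mem_iUnion, Set.mem_empty_iff_false,
      iff_false, not_and, not_exists]
    rintro (⟨i, hi⟩ | hi) j hj
    · exact Set.eq_empty_iff_forall_notMem.1 (hAB i j) v ⟨hi, hj⟩
    · exact Set.eq_empty_iff_forall_notMem.1 (hBI j) v ⟨hj, hi⟩
  · rintro u (hu | hu) v hv huv hadjuv
    · rcases hv with hv | hv
      · rcases (hadj u v).1 hadjuv with ⟨i, j, hij, ⟨_, hvB⟩ | ⟨_, huB⟩⟩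
        · obtain ⟨p, hp⟩ := Set.mem_iUnion.1 hv
          exact Set.eq_empty_iff_forall_notMem.1 (hAB p j) v ⟨hp, hvB⟩
        · obtain ⟨p, hp⟩ := Set.mem_iUnion.1 hu
          exact Set.eq_empty_iff_forall_notMem.1 (hAB p j) u ⟨hp, huB⟩
      · rw [hI] at hv
        exact hv u hadjuv.symm
    · rw [hI] at hu
      exact hu v hadjuv
  · intro u hu v hv huv hadjuv
    obtain ⟨i, hi⟩ := Set.mem_iUnion.1 hu
    obtain ⟨j, hj⟩ := Set.mem_iUnion.1 hv
    rcases (hadj u v).1 hadjuv with ⟨p, q, hpq, ⟨huA, _⟩ | ⟨hvA, _⟩⟩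
    · exact Set.eq_empty_iff_forall_notMem.1 (hAB p i) u ⟨huA, hi⟩
    · exact Set.eq_empty_iff_forall_notMem.1 (hAB p j) v ⟨hvA, hj⟩
  · intro u hu v hv
    -- both in (⋃ A) ∪ I
    have key : ∀ w, w ∈ (⋃ i, A i) ∪ I → (∀ i, w ∈ A i → ∀ z ∈ G.neighborSet w, ∃ q, i ≤ q ∧ z ∈ B q) := by
      intro w _ i hwA z hz
      rcases (hadj w z).1 hz with ⟨p, q, hpq, ⟨hwA', hzB⟩ | ⟨hzA, hwB⟩⟩
      · have : p = i := by
          by_contra hne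
          exact Set.eq_empty_iff_forall_notMem.1 (hAA p i hne) w ⟨hwA', hwA⟩
        exact ⟨q, this ▸ hpq, hzB⟩
      · exact absurd ⟨hwA, hwB⟩ (Set.eq_empty_iff_forall_notMem.1 (hAB i q) w)
    have iso : ∀ w, w ∈ I → G.neighborSet w = ∅ := by
      intro w hw; ext z; simp only [mem_neighborSet, Set.mem_empty_iff_false, iff_false]
      rw [hI] at hw
      exact hw z
    rcases hu with hu | hu
    · rcases hv with hv | hv
      · obtain ⟨i, hi⟩ := Set.mem_iUnion.1 hu
        obtain ⟨j, hj⟩ := Set.mem_iUnion.1 hv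
        rcases le_total i j with hij | hij
        · right; intro z hz
          obtain ⟨q, hq, hzB⟩ := key v (Or.inl hv) j hj z hz
          exact (hadj u z).2 ⟨i, q, le_trans hij hq, Or.inl ⟨hi, hzB⟩⟩
        · left; intro z hz
          obtain ⟨q, hq, hzB⟩ := key u (Or.inl hu) i hi z hz
          exact (hadj v z).2 ⟨j, q, le_trans hij hq, Or.inl ⟨hj, hzB⟩⟩
      · right; rw [iso v hv]; exact Set.empty_subset _
    · left; rw [iso u hu]; exact Set.empty_subset _

private lemma fwd_aux {V : Type*} [Fintype V] (G : SimpleGraph V) (h : IsChainGraph G) :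
    ∃ (k : ℕ) (A B : Fin k → Set V) (I : Set V), IsChainPartition G k A B I := by
  classical
  obtain ⟨X, Y, hXY, hXYd, hXp, hYp, hchain⟩ := h
  set FS : Set (Set V) := {N | ∃ x ∈ X, G.neighborSet x = N ∧ N.Nonempty} with hFS
  have hFSfin : FS.Finite := Set.toFinite _
  have hcomp : ∀ M ∈ FS, ∀ M' ∈ FS, M ⊆ M' ∨ M' ⊆ M := by
    rintro M ⟨x, hx, hNx, -⟩ M' ⟨x', hx', hNx', -⟩
    rw [← hNx, ← hNx']
    exact hchain x hx x' hx'
  have huniq : ∀ M ∈ FS, ∀ M' ∈ FS, M.ncard = M'.ncard → M = M' := by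
    intro M hM M' hM' hc
    rcases hcomp M hM M' hM' with h1 | h1
    · exact Set.eq_of_subset_of_ncard_le h1 hc.ge
    · exact (Set.eq_of_subset_of_ncard_le h1 hc.le).symm
  set F : Finset (Set V) := hFSfin.toFinset with hF
  set cs : Finset ℕ := F.image Set.ncard with hcs
  set k := cs.card with hk
  set σ := cs.orderIsoOfFin rfl with hσ
  have hNex : ∀ i : Fin k, ∃ M, M ∈ FS ∧ M.ncard = (σ i.rev : ℕ) := by
    intro i
    have : (σ i.rev : ℕ) ∈ cs := (σ i.rev).2
    obtain ⟨M, hM, hMc⟩ := Finset.mem_image.1 this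
    exact ⟨M, hFSfin.mem_toFinset.1 hM, hMc⟩
  set N : Fin k → Set V := fun i => (hNex i).choose with hNdef
  have hNmem : ∀ i, N i ∈ FS := fun i => (hNex i).choose_spec.1
  have hNcard : ∀ i, (N i).ncard = (σ i.rev : ℕ) := fun i => (hNex i).choose_spec.2
  have hNanti : ∀ i j : Fin k, i < j → N j ⊂ N i := by
    intro i j hij
    have hc : (N j).ncard < (N i).ncard := by
      rw [hNcard, hNcard]
      exact_mod_cast σ.lt_iff_lt.2 (Fin.rev_lt_rev.2 hij)
    rcases hcomp _ (hNmem j) _ (hNmem i) with h1 | h1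
    · exact ⟨h1, fun h2 => absurd (Set.ncard_le_ncard h2) (not_le.2 hc)⟩
    · exact absurd (Set.ncard_le_ncard h1) (not_le.2 hc)
  have hNsubset : ∀ i j : Fin k, i ≤ j → N j ⊆ N i := by
    intro i j hij
    rcases eq_or_lt_of_le hij with rfl | h
    · exact subset_rfl
    · exact (hNanti i j h).1
  have hNinj : Function.Injective N := by
    intro i j hij
    have hc := congrArg Set.ncard hij
    rw [hNcard, hNcard] at hc
    have : i.rev = j.rev := σ.injective (Subtype.ext hc)
    exact Fin.rev_injective this
  have hNsurj : ∀ M ∈ FS, ∃ i, N i = M := by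
    intro M hM
    have hMc : M.ncard ∈ cs := Finset.mem_image.2 ⟨M, hFSfin.mem_toFinset.2 hM, rfl⟩
    refine ⟨(σ.symm ⟨M.ncard, hMc⟩).rev, huniq _ (hNmem _) _ hM ?_⟩
    rw [hNcard, Fin.rev_rev]
    simp
  have hNY : ∀ i, N i ⊆ Y := by
    intro i z hz
    obtain ⟨x, hx, hNx, -⟩ := hNmem i
    rw [← hNx] at hz
    have hz' : z ∈ X ∪ Y := hXY ▸ Set.mem_univ z
    rcases hz' with hzX | hzY
    · exact absurd hz (hXp hx hzX (G.ne_of_adj hz))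
    · exact hzY
  set A : Fin k → Set V := fun i => {x | x ∈ X ∧ G.neighborSet x = N i} with hA
  set B : Fin k → Set V := fun i => N i \ ⋃ j, ⋃ (_ : i < j), N j with hB
  set I : Set V := {v | ∀ w, ¬ G.Adj v w} with hI
  have memB : ∀ (i : Fin k) (y : V), y ∈ B i ↔ y ∈ N i ∧ ∀ j, i < j → y ∉ N j := by
    intro i y
    simp [hB]
  have hBofN : ∀ (i : Fin k) (y : V), y ∈ N i → ∃ j, i ≤ j ∧ y ∈ B j := by
    intro i y hy
    set s : Finset (Fin k) := Finset.univ.filter (fun j => y ∈ N j) with hs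
    have hsne : s.Nonempty := ⟨i, by simp [hs, hy]⟩
    have hj0 : y ∈ N (s.max' hsne) := (Finset.mem_filter.1 (s.max'_mem hsne)).2
    refine ⟨s.max' hsne, s.le_max' i (by simp [hs, hy]), (memB _ _).2 ⟨hj0, ?_⟩⟩
    intro j hj hyj
    exact absurd (s.le_max' j (by simp [hs, hyj])) (not_le.2 hj)
  refine ⟨k, A, B, I, ?_, ?_, rfl, ?_, ?_, ?_, ?_, ?_, ?_, ?_⟩
  · -- A nonempty
    intro i
    obtain ⟨x, hx, hNx, -⟩ := hNmem i
    exact ⟨x, hx, hNx⟩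
  · -- B nonempty
    intro i
    by_cases htop : ∃ j, i < j
    · obtain ⟨j, hj⟩ := htop
      have hj1lt : (i : ℕ) + 1 < k := lt_of_le_of_lt (Nat.succ_le_of_lt hj) j.isLt
      set j1 : Fin k := ⟨(i : ℕ) + 1, hj1lt⟩ with hj1
      have hij1 : i < j1 := by simp [hj1, Fin.lt_def]
      obtain ⟨y, hy, hy'⟩ := Set.exists_of_ssubset (hNanti i j1 hij1)
      refine ⟨y, (memB _ _).2 ⟨hy, ?_⟩⟩
      intro j' hj' hyj'
      exact hy' (hNsubset j1 j' (by rw [Fin.le_def]; exact Nat.succ_le_of_lt hj') hyj')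
    · push_neg at htop
      obtain ⟨x, hx, hNx, hne⟩ := hNmem i
      obtain ⟨y, hy⟩ := hne
      exact ⟨y, (memB _ _).2 ⟨hy, fun j hj _ => absurd hj (not_lt.2 (htop j))⟩⟩
  · -- cover
    rw [Set.eq_univ_iff_forall]
    intro v
    by_cases hiso : ∀ w, ¬ G.Adj v w
    · exact Or.inr hiso
    · push_neg at hiso
      obtain ⟨w, hw⟩ := hiso
      have hv : v ∈ X ∪ Y := hXY ▸ Set.mem_univ v
      rcases hv with hvX | hvY
      · have hMem : G.neighborSet v ∈ FS := ⟨v, hvX, rfl, ⟨w, hw⟩⟩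
        obtain ⟨i, hi⟩ := hNsurj _ hMem
        exact Or.inl (Or.inl (Set.mem_iUnion.2 ⟨i, hvX, hi.symm⟩))
      · have hwX : w ∈ X := by
          have hw' : w ∈ X ∪ Y := hXY ▸ Set.mem_univ w
          rcases hw' with h1 | h1
          · exact h1
          · exact absurd hw (hYp hvY h1 (G.ne_of_adj hw))
        have hMem : G.neighborSet w ∈ FS := ⟨w, hwX, rfl, ⟨v, hw.symm⟩⟩
        obtain ⟨i, hi⟩ := hNsurj _ hMem
        have hvN : v ∈ N i := by rw [hi]; exact hw.symm
        obtain ⟨j, _, hvB⟩ := hBofN i v hvN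
        exact Or.inl (Or.inr (Set.mem_iUnion.2 ⟨j, hvB⟩))
  · -- A disjoint
    intro i j hne
    rw [Set.eq_empty_iff_forall_notMem]
    rintro x ⟨⟨-, h1⟩, ⟨-, h2⟩⟩
    exact hne (hNinj (h1 ▸ h2 ▸ rfl))
  · -- B disjoint
    intro i j hne
    rw [Set.eq_empty_iff_forall_notMem]
    rintro y ⟨h1, h2⟩
    rw [memB] at h1 h2
    rcases hne.lt_or_gt with h | h
    · exact h1.2 j h h2.1
    · exact h2.2 i h h1.1
  · -- A ∩ B
    intro i j
    rw [Set.eq_empty_iff_forall_notMem]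
    rintro x ⟨⟨hxX, -⟩, hxB⟩
    have hxY : x ∈ Y := hNY j ((memB j x).1 hxB).1
    exact Set.eq_empty_iff_forall_notMem.1 hXYd x ⟨hxX, hxY⟩
  · -- A ∩ I
    intro i
    rw [Set.eq_empty_iff_forall_notMem]
    rintro x ⟨⟨-, hNx⟩, hxI⟩
    obtain ⟨-, -, -, y, hy⟩ := hNmem i
    rw [← hNx] at hy
    exact hxI y hy
  · -- B ∩ I
    intro i
    rw [Set.eq_empty_iff_forall_notMem]
    rintro y ⟨hyB, hyI⟩
    obtain ⟨x, -, hNx, -⟩ := hNmem i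
    have : y ∈ G.neighborSet x := by rw [hNx]; exact ((memB i y).1 hyB).1
    exact hyI x this.symm
  · -- adjacency
    intro x y
    constructor
    · intro hadj
      have hx : x ∈ X ∪ Y := hXY ▸ Set.mem_univ x
      have hy : y ∈ X ∪ Y := hXY ▸ Set.mem_univ y
      rcases hx with hxX | hxY
      · rcases hy with hyX | hyY
        · exact absurd hadj (hXp hxX hyX hadj.ne)
        · have hMem : G.neighborSet x ∈ FS := ⟨x, hxX, rfl, ⟨y, hadj⟩⟩
          obtain ⟨i, hi⟩ := hNsurj _ hMem
          have hyN : y ∈ N i := by rw [hi]; exact hadj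
          obtain ⟨j, hij, hyB⟩ := hBofN i y hyN
          exact ⟨i, j, hij, Or.inl ⟨⟨hxX, hi.symm⟩, hyB⟩⟩
      · rcases hy with hyX | hyY
        · have hMem : G.neighborSet y ∈ FS := ⟨y, hyX, rfl, ⟨x, hadj.symm⟩⟩
          obtain ⟨i, hi⟩ := hNsurj _ hMem
          have hxN : x ∈ N i := by rw [hi]; exact hadj.symm
          obtain ⟨j, hij, hxB⟩ := hBofN i x hxN
          exact ⟨i, j, hij, Or.inr ⟨⟨hyX, hi.symm⟩, hxB⟩⟩
        · exact absurd hadj (hYp hxY hyY hadj.ne)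
    · rintro ⟨i, j, hij, ⟨⟨hxX, hxN⟩, hyB⟩ | ⟨⟨hyX, hyN⟩, hxB⟩⟩
      · have : y ∈ N i := hNsubset i j hij ((memB j y).1 hyB).1
        rw [← hxN] at this
        exact this
      · have : x ∈ N i := hNsubset i j hij ((memB j x).1 hxB).1
        rw [← hyN] at this
        exact this.symm

/-- A graph is a chain graph if and only if it has a chain partition. -/
theorem stmt12 {V : Type*} [Fintype V] (G : SimpleGraph V) :
    IsChainGraph G ↔
      ∃ (k : ℕ) (A B : Fin k → Set V) (I : Set V), IsChainPartition G k A B I := by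
  exact ⟨fun h => fwd_aux G h, fun ⟨k, A, B, I, h⟩ => back_aux G h⟩
end

section
/- The class of chain graphs is degree sandwich monotone: if G′ is a chain graph and F ⊆ E(G′) is a set of edges such that G′ − F is a chain graph, then for every degree-minimal edge e in F, the graph G′ − e is a chain graph. -/
open SimpleGraph

variable {V : Type*}

lemma mem_nbr {G : SimpleGraph V} {a b : V} (h : b ∈ G.neighborSet a) : G.Adj a b := h

/-- In a chain graph, the neighborhoods of the `Y`-side vertices are also nested. -/
lemma chain_nested_Y {G : SimpleGraph V} {X Y : Set V} (hXY : X ∪ Y = Set.univ)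
    (hYi : Y.Pairwise fun u v => ¬ G.Adj u v)
    (hnest : ∀ u ∈ X, ∀ v ∈ X,
      G.neighborSet u ⊆ G.neighborSet v ∨ G.neighborSet v ⊆ G.neighborSet u) :
    ∀ p ∈ Y, ∀ q ∈ Y, G.neighborSet p ⊆ G.neighborSet q ∨ G.neighborSet q ⊆ G.neighborSet p := by
  intro p hp q hq
  have hmem : ∀ t : V, t ∈ X ∨ t ∈ Y := by
    intro t
    have : t ∈ X ∪ Y := by rw [hXY]; exact Set.mem_univ t
    exact this
  by_contra hcon
  push_neg at hcon
  obtain ⟨h1, h2⟩ := hcon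
  obtain ⟨a, ha1, ha2⟩ := Set.not_subset.mp h1
  obtain ⟨b, hb1, hb2⟩ := Set.not_subset.mp h2
  have hpa : G.Adj p a := ha1
  have hqb : G.Adj q b := hb1
  have haX : a ∈ X := by
    rcases hmem a with h | h
    · exact h
    · exact absurd hpa (hYi hp h hpa.ne)
  have hbX : b ∈ X := by
    rcases hmem b with h | h
    · exact h
    · exact absurd hqb (hYi hq h hqb.ne)
  rcases hnest a haX b hbX with h | h
  · exact hb2 (h hpa.symm).symm
  · exact ha2 (h hqb.symm).symm

/-- Chain graphs are triangle-free. -/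
lemma chain_no_triangle {G : SimpleGraph V} (hG : IsChainGraph G) {a b c : V}
    (hab : G.Adj a b) (hac : G.Adj a c) : ¬ G.Adj b c := by
  obtain ⟨X, Y, hXY, _, hXi, hYi, _⟩ := hG
  have hmem : ∀ t : V, t ∈ X ∨ t ∈ Y := by
    intro t
    have : t ∈ X ∪ Y := by rw [hXY]; exact Set.mem_univ t
    exact this
  intro hbc
  rcases hmem a with ha | ha
  · have hb : b ∈ Y := by
      rcases hmem b with h | h
      · exact absurd hab (hXi ha h hab.ne)
      · exact h
    have hc : c ∈ Y := by
      rcases hmem c with h | h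
      · exact absurd hac (hXi ha h hac.ne)
      · exact h
    exact hYi hb hc hbc.ne hbc
  · have hb : b ∈ X := by
      rcases hmem b with h | h
      · exact h
      · exact absurd hab (hYi ha h hab.ne)
    have hc : c ∈ X := by
      rcases hmem c with h | h
      · exact h
      · exact absurd hac (hYi ha h hac.ne)
    exact hXi hb hc hbc.ne hbc

/-- Chain graphs contain no induced `2K₂`. -/
lemma chain_no_2K2 {H : SimpleGraph V} (hH : IsChainGraph H) {a b c d : V}
    (hab : H.Adj a b) (hcd : H.Adj c d) (h1 : ¬ H.Adj a c) (h2 : ¬ H.Adj a d)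
    (h3 : ¬ H.Adj b c) (h4 : ¬ H.Adj b d) : False := by
  obtain ⟨X, Y, hXY, _, hXi, hYi, hnest⟩ := hH
  have hYnest := chain_nested_Y hXY hYi hnest
  have hmem : ∀ t : V, t ∈ X ∨ t ∈ Y := by
    intro t
    have : t ∈ X ∪ Y := by rw [hXY]; exact Set.mem_univ t
    exact this
  rcases hmem a with ha | ha
  · have hb : b ∈ Y := by
      rcases hmem b with h | h
      · exact absurd hab (hXi ha h hab.ne)
      · exact h
    rcases hmem c with hc | hc
    · have hd : d ∈ Y := by
        rcases hmem d with h | h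
        · exact absurd hcd (hXi hc h hcd.ne)
        · exact h
      rcases hnest a ha c hc with h | h
      · exact h3 (mem_nbr (h hab)).symm
      · exact h2 (mem_nbr (h hcd))
    · have hd : d ∈ X := by
        rcases hmem d with h | h
        · exact h
        · exact absurd hcd (hYi hc h hcd.ne)
      rcases hnest a ha d hd with h | h
      · exact h4 (mem_nbr (h hab)).symm
      · exact h1 (mem_nbr (h hcd.symm))
  · have hb : b ∈ X := by
      rcases hmem b with h | h
      · exact h
      · exact absurd hab (hYi ha h hab.ne)
    rcases hmem c with hc | hc
    · have hd : d ∈ Y := by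
        rcases hmem d with h | h
        · exact absurd hcd (hXi hc h hcd.ne)
        · exact h
      rcases hnest b hb c hc with h | h
      · exact h1 (mem_nbr (h hab.symm)).symm
      · exact h4 (mem_nbr (h hcd))
    · have hd : d ∈ X := by
        rcases hmem d with h | h
        · exact h
        · exact absurd hcd (hYi hc h hcd.ne)
      rcases hYnest a ha c hc with h | h
      · exact h3 (mem_nbr (h hab)).symm
      · exact h2 (mem_nbr (h hcd))

/-- Neighborhoods of two vertices with a common neighbor are nested in a chain graph. -/
lemma chain_nested_common {G : SimpleGraph V} (hG : IsChainGraph G) {a b c : V}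
    (hac : G.Adj a c) (hbc : G.Adj b c) :
    G.neighborSet a ⊆ G.neighborSet b ∨ G.neighborSet b ⊆ G.neighborSet a := by
  obtain ⟨X, Y, hXY, _, hXi, hYi, hnest⟩ := hG
  have hYnest := chain_nested_Y hXY hYi hnest
  have hmem : ∀ t : V, t ∈ X ∨ t ∈ Y := by
    intro t
    have : t ∈ X ∪ Y := by rw [hXY]; exact Set.mem_univ t
    exact this
  rcases hmem c with hc | hc
  · have ha : a ∈ Y := by
      rcases hmem a with h | h
      · exact absurd hac.symm (hXi hc h hac.symm.ne)
      · exact h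
    have hb : b ∈ Y := by
      rcases hmem b with h | h
      · exact absurd hbc.symm (hXi hc h hbc.symm.ne)
      · exact h
    exact hYnest a ha b hb
  · have ha : a ∈ X := by
      rcases hmem a with h | h
      · exact h
      · exact absurd hac.symm (hYi hc h hac.symm.ne)
    have hb : b ∈ X := by
      rcases hmem b with h | h
      · exact h
      · exact absurd hbc.symm (hYi hc h hbc.symm.ne)
    exact hnest a ha b hb

lemma chain_core {V : Type*} [Fintype V] {G' : SimpleGraph V} (hG' : IsChainGraph G')
    {F : Set (Sym2 V)} (hF : F ⊆ G'.edgeSet) (hsafe : IsChainGraph (G'.deleteEdges F))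
    {u v : V} (huvF : s(u, v) ∈ F)
    (hA : ∀ x, s(x, v) ∈ F → deg G' u ≤ deg G' x)
    (hB : ∀ w, s(u, w) ∈ F → deg G' v ≤ deg G' w)
    {x : V} (hxv : G'.Adj x v) (hsub : G'.neighborSet x ⊆ G'.neighborSet u) :
    G'.neighborSet u ⊆ G'.neighborSet x ∪ {v} := by
  have huv : G'.Adj u v := (G'.mem_edgeSet).mp (hF huvF)
  intro w hw
  by_contra hwc
  simp only [Set.mem_union, Set.mem_singleton_iff, not_or] at hwc
  obtain ⟨hwx, hwv⟩ := hwc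
  have huw : G'.Adj u w := hw
  have hxw : ¬ G'.Adj x w := hwx
  have hxu : ¬ G'.Adj x u := chain_no_triangle hG' hxv.symm huv.symm
  have hvw : ¬ G'.Adj v w := chain_no_triangle hG' huv huw
  by_cases hxvF : s(x, v) ∈ F
  · have h1 : deg G' u ≤ deg G' x := hA x hxvF
    have heq : G'.neighborSet x = G'.neighborSet u :=
      Set.eq_of_subset_of_ncard_le hsub h1 (Set.toFinite _)
    have : w ∈ G'.neighborSet x := by rw [heq]; exact hw
    exact hxw (mem_nbr this)
  · by_cases huwF : s(u, w) ∈ F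
    · have h1 : deg G' v ≤ deg G' w := hB w huwF
      rcases chain_nested_common hG' huv.symm huw.symm with h | h
      · exact hxw (mem_nbr (h hxv.symm)).symm
      · have heq : G'.neighborSet w = G'.neighborSet v :=
          Set.eq_of_subset_of_ncard_le h h1 (Set.toFinite _)
        have hx' : x ∈ G'.neighborSet w := by rw [heq]; exact hxv.symm
        exact hxw (mem_nbr hx').symm
    · have hH1 : (G'.deleteEdges F).Adj x v := by
        rw [SimpleGraph.deleteEdges_adj]; exact ⟨hxv, hxvF⟩
      have hH2 : (G'.deleteEdges F).Adj u w := by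
        rw [SimpleGraph.deleteEdges_adj]; exact ⟨huw, huwF⟩
      have nadj : ∀ p q : V, ¬ G'.Adj p q → ¬ (G'.deleteEdges F).Adj p q := by
        intro p q hpq hc
        exact hpq (SimpleGraph.deleteEdges_adj.mp hc).1
      have hvu : ¬ (G'.deleteEdges F).Adj v u := by
        intro hc
        exact (SimpleGraph.deleteEdges_adj.mp hc).2 (by rwa [Sym2.eq_swap])
      exact chain_no_2K2 hsafe hH1 hH2 (nadj _ _ hxu) (nadj _ _ hxw) hvu (nadj _ _ hvw)

lemma chain_step {V : Type*} [Fintype V] {G' : SimpleGraph V} (hG' : IsChainGraph G')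
    {F : Set (Sym2 V)} (hF : F ⊆ G'.edgeSet) (hsafe : IsChainGraph (G'.deleteEdges F))
    {u v : V} (huvF : s(u, v) ∈ F)
    (hA : ∀ x, s(x, v) ∈ F → deg G' u ≤ deg G' x)
    (hB : ∀ w, s(u, w) ∈ F → deg G' v ≤ deg G' w)
    {x : V} (hxu : x ≠ u) (hxv : x ≠ v)
    (hnst : G'.neighborSet x ⊆ G'.neighborSet u ∨ G'.neighborSet u ⊆ G'.neighborSet x) :
    (G'.deleteEdges {s(u, v)}).neighborSet x ⊆ (G'.deleteEdges {s(u, v)}).neighborSet u ∨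
      (G'.deleteEdges {s(u, v)}).neighborSet u ⊆ (G'.deleteEdges {s(u, v)}).neighborSet x := by
  have huv : G'.Adj u v := (G'.mem_edgeSet).mp (hF huvF)
  have hne_tw : ∀ t w : V, t ≠ u → t ≠ v → s(t, w) ≠ s(u, v) := by
    intro t w h1 h2 h
    rcases Sym2.eq_iff.mp h with ⟨ha, _⟩ | ⟨ha, _⟩
    · exact h1 ha
    · exact h2 ha
  have hmem'' : ∀ t w : V, w ∈ (G'.deleteEdges {s(u, v)}).neighborSet t ↔
      G'.Adj t w ∧ s(t, w) ≠ s(u, v) := by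
    intro t w
    rw [SimpleGraph.mem_neighborSet, SimpleGraph.deleteEdges_adj, Set.mem_singleton_iff]
  rcases hnst with hs | hs
  · by_cases hadj : G'.Adj x v
    · right
      have hcore := chain_core hG' hF hsafe huvF hA hB hadj hs
      intro w hw
      rw [hmem''] at hw ⊢
      obtain ⟨hw1, hw2⟩ := hw
      have hwv : w ≠ v := by
        intro h; exact hw2 (by rw [h])
      have : w ∈ G'.neighborSet x := by
        rcases hcore hw1 with h | h
        · exact h
        · exact absurd h hwv
      exact ⟨this, hne_tw x w hxu hxv⟩
    · left
      intro w hw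
      rw [hmem''] at hw ⊢
      obtain ⟨hw1, _⟩ := hw
      refine ⟨hs hw1, ?_⟩
      intro h
      rcases Sym2.eq_iff.mp h with ⟨_, h2⟩ | ⟨h1, _⟩
      · exact hadj (h2 ▸ hw1)
      · exact huv.ne h1
  · right
    intro w hw
    rw [hmem''] at hw ⊢
    obtain ⟨hw1, _⟩ := hw
    exact ⟨hs hw1, hne_tw x w hxu hxv⟩

/-- The class of chain graphs is degree sandwich monotone. -/
theorem stmt13 {V : Type*} [Fintype V] (G' : SimpleGraph V) (hG' : IsChainGraph G')
    (F : Set (Sym2 V)) (hF : F ⊆ G'.edgeSet) (hsafe : IsChainGraph (G'.deleteEdges F))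
    (u v : V) (h : DegreeMinimal G' F u v) :
    IsChainGraph (G'.deleteEdges {s(u, v)}) := by
  obtain ⟨hmemF, hmin1, hmin2⟩ := h
  have huv : G'.Adj u v := (G'.mem_edgeSet).mp (hF hmemF)
  have hA : ∀ x, s(x, v) ∈ F → deg G' u ≤ deg G' x := fun x hx => hmin1 x v hx
  have hB : ∀ w, s(u, w) ∈ F → deg G' v ≤ deg G' w := hmin2
  have hswapF : s(v, u) ∈ F := by rwa [Sym2.eq_swap]
  have hA' : ∀ x, s(x, u) ∈ F → deg G' v ≤ deg G' x := by
    intro x hx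
    exact hmin2 x (by rwa [Sym2.eq_swap] at hx)
  have hB' : ∀ w, s(v, w) ∈ F → deg G' u ≤ deg G' w := by
    intro w hw
    exact hmin1 w v (by rwa [Sym2.eq_swap] at hw)
  have hswapE : s(v, u) = s(u, v) := Sym2.eq_swap
  obtain ⟨X, Y, hXY, hdisj, hXi, hYi, hnest⟩ := hG'
  have hG'c : IsChainGraph G' := ⟨X, Y, hXY, hdisj, hXi, hYi, hnest⟩
  have hne_tw : ∀ t w : V, t ≠ u → t ≠ v → s(t, w) ≠ s(u, v) := by
    intro t w h1 h2 hh
    rcases Sym2.eq_iff.mp hh with ⟨ha, _⟩ | ⟨ha, _⟩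
    · exact h1 ha
    · exact h2 ha
  have hNsame : ∀ t : V, t ≠ u → t ≠ v →
      (G'.deleteEdges {s(u, v)}).neighborSet t = G'.neighborSet t := by
    intro t h1 h2
    ext w
    rw [SimpleGraph.mem_neighborSet, SimpleGraph.mem_neighborSet,
      SimpleGraph.deleteEdges_adj, Set.mem_singleton_iff]
    exact ⟨fun hh => hh.1, fun hh => ⟨hh, hne_tw t w h1 h2⟩⟩
  refine ⟨X, Y, hXY, hdisj, ?_, ?_, ?_⟩
  · intro a ha b hb hne hadj
    exact hXi ha hb hne (SimpleGraph.deleteEdges_adj.mp hadj).1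
  · intro a ha b hb hne hadj
    exact hYi ha hb hne (SimpleGraph.deleteEdges_adj.mp hadj).1
  · intro a ha b hb
    rcases eq_or_ne u a with rfl | hau
    · rcases eq_or_ne v b with rfl | hbv
      · exact absurd huv (hXi ha hb huv.ne)
      · rcases eq_or_ne u b with rfl | hbu
        · left; exact subset_rfl
        · exact (chain_step hG'c hF hsafe hmemF hA hB hbu.symm hbv.symm
            (hnest b hb u ha)).symm
    · rcases eq_or_ne v a with rfl | hav
      · rcases eq_or_ne u b with rfl | hbu
        · exact absurd huv.symm (hXi ha hb huv.ne')
        · rcases eq_or_ne v b with rfl | hbv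
          · left; exact subset_rfl
          · have := chain_step hG'c hF hsafe hswapF hA' hB' hbv.symm hbu.symm
              (hnest b hb v ha)
            rw [hswapE] at this
            exact this.symm
      · rcases eq_or_ne u b with rfl | hbu
        · exact chain_step hG'c hF hsafe hmemF hA hB hau.symm hav.symm (hnest a ha u hb)
        · rcases eq_or_ne v b with rfl | hbv
          · have := chain_step hG'c hF hsafe hswapF hA' hB' hav.symm hau.symm
              (hnest a ha v hb)
            rw [hswapE] at this
            exact this
          · rw [hNsame a hau.symm hav.symm, hNsame b hbu.symm hbv.symm]
            exact hnest a ha b hb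
end

section
/- The class of chain graphs is sandwich monotone: if G′ is a chain graph and F ⊆ E(G′) is a nonempty set of edges such that G′ − F is a chain graph, then there exists an edge e ∈ F such that G′ − e is a chain graph. -/
open SimpleGraph

variable {V : Type*}

/-- A chain graph has no induced `2K₂`. -/
lemma IsChainGraph.no2K2 {V : Type*} {H : SimpleGraph V} (h : IsChainGraph H)
    {x1 y1 x2 y2 : V} (e1 : H.Adj x1 y1) (e2 : H.Adj x2 y2)
    (n12 : ¬ H.Adj x1 y2) (n21 : ¬ H.Adj x2 y1)
    (nx : ¬ H.Adj x1 x2) (ny : ¬ H.Adj y1 y2) : False := by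
  obtain ⟨X, Y, hU, hI, hX, hY, hord⟩ := h
  have hmem : ∀ v : V, v ∈ X ∨ v ∈ Y := fun v => by
    have : v ∈ X ∪ Y := hU ▸ Set.mem_univ v
    exact this
  have hdisj : ∀ v : V, v ∈ X → v ∈ Y → False := fun v hx hy => by
    have : v ∈ X ∩ Y := ⟨hx, hy⟩
    rw [hI] at this; exact this
  have key : ∀ p q r s : V, H.Adj p q → H.Adj r s → ¬ H.Adj p s → ¬ H.Adj r q →
      ¬ H.Adj p r → ¬ H.Adj q s → p ∈ X → False := by
    intro p q r s e1 e2 n12 n21 nx ny hpX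
    rcases hmem r with hrX | hrY
    · rcases hord p hpX r hrX with hsub | hsub
      · exact n21 ((H.mem_neighborSet r q).mp (hsub ((H.mem_neighborSet p q).mpr e1)))
      · exact n12 ((H.mem_neighborSet p s).mp (hsub ((H.mem_neighborSet r s).mpr e2)))
    · have hsX : s ∈ X := by
        rcases hmem s with hsX | hsY
        · exact hsX
        · exact absurd e2 (hY hrY hsY e2.ne)
      rcases hord p hpX s hsX with hsub | hsub
      · exact ny (((H.mem_neighborSet s q).mp (hsub ((H.mem_neighborSet p q).mpr e1))).symm)
      · exact nx ((H.mem_neighborSet p r).mp (hsub ((H.mem_neighborSet s r).mpr e2.symm)))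
  rcases hmem x1 with h1 | h1
  · exact key x1 y1 x2 y2 e1 e2 n12 n21 nx ny h1
  · have hy1X : y1 ∈ X := by
      rcases hmem y1 with hX1 | hY1
      · exact hX1
      · exact absurd e1 (hY h1 hY1 e1.ne)
    exact key y1 x1 y2 x2 e1.symm e2.symm (fun h => n21 h.symm) (fun h => n12 h.symm)
      ny nx hy1X

/-- The class of chain graphs is sandwich monotone. -/
theorem stmt14 {V : Type*} [Fintype V] (G' : SimpleGraph V) (hG' : IsChainGraph G')
    (F : Set (Sym2 V)) (hF : F ⊆ G'.edgeSet) (hne : F.Nonempty)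
    (hsafe : IsChainGraph (G'.deleteEdges F)) :
    ∃ e ∈ F, IsChainGraph (G'.deleteEdges {e}) := by
  classical
  obtain ⟨A, B, hU, hI, hA, hB, hord⟩ := hG'
  have hmem : ∀ v : V, v ∈ A ∨ v ∈ B := fun v => by
    have : v ∈ A ∪ B := hU ▸ Set.mem_univ v
    exact this
  have hdisj : ∀ v : V, v ∈ A → v ∈ B → False := fun v hx hy => by
    have : v ∈ A ∩ B := ⟨hx, hy⟩
    rw [hI] at this; exact this
  have hside : ∀ u v : V, G'.Adj u v → u ∈ A → v ∈ B := by
    intro u v h hu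
    rcases hmem v with hv | hv
    · exact absurd h (hA hu hv h.ne)
    · exact hv
  have hsideB : ∀ u v : V, G'.Adj u v → u ∈ B → v ∈ A := by
    intro u v h hu
    rcases hmem v with hv | hv
    · exact hv
    · exact absurd h (hB hu hv h.ne)
  -- B-side neighborhoods are also linearly ordered
  have compB : ∀ y1 ∈ B, ∀ y2 ∈ B,
      G'.neighborSet y1 ⊆ G'.neighborSet y2 ∨ G'.neighborSet y2 ⊆ G'.neighborSet y1 := by
    intro y1 h1 y2 h2
    by_contra hc
    push_neg at hc
    obtain ⟨p, hp1, hp2⟩ := Set.not_subset.mp hc.1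
    obtain ⟨q, hq1, hq2⟩ := Set.not_subset.mp hc.2
    have hp1' : G'.Adj y1 p := (G'.mem_neighborSet y1 p).mp hp1
    have hq1' : G'.Adj y2 q := (G'.mem_neighborSet y2 q).mp hq1
    have hpA : p ∈ A := hsideB y1 p hp1' h1
    have hqA : q ∈ A := hsideB y2 q hq1' h2
    rcases hord p hpA q hqA with hsub | hsub
    · have : G'.Adj q y1 := (G'.mem_neighborSet q y1).mp
        (hsub ((G'.mem_neighborSet p y1).mpr hp1'.symm))
      exact hq2 ((G'.mem_neighborSet y1 q).mpr this.symm)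
    · have : G'.Adj p y2 := (G'.mem_neighborSet p y2).mp
        (hsub ((G'.mem_neighborSet q y2).mpr hq1'.symm))
      exact hp2 ((G'.mem_neighborSet y2 p).mpr this.symm)
  -- choose the A-endpoint a of an F-edge with minimal neighborhood
  set S : Set V := {x : V | x ∈ A ∧ ∃ y, s(x, y) ∈ F} with hS
  have hSne : S.Nonempty := by
    obtain ⟨f, hf⟩ := hne
    have hfe : f ∈ G'.edgeSet := hF hf
    induction f with
    | _ u v =>
      have hadj : G'.Adj u v := (G'.mem_edgeSet).mp hfe
      rcases hmem u with hu | hu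
      · exact ⟨u, hu, v, hf⟩
      · exact ⟨v, hsideB u v hadj hu, u, by rwa [Sym2.eq_swap]⟩
  obtain ⟨a, haS, hamin⟩ := Set.exists_min_image S (fun x => (G'.neighborSet x).ncard)
    (Set.toFinite S) hSne
  have haA : a ∈ A := haS.1
  have hminA : ∀ x ∈ S, G'.neighborSet a ⊆ G'.neighborSet x := by
    intro x hx
    rcases hord a haA x hx.1 with h | h
    · exact h
    · have heq := Set.eq_of_subset_of_ncard_le h (hamin x hx) (Set.toFinite _)
      exact heq.symm.subset
  -- choose the F-partner b of a with minimal neighborhood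
  set T : Set V := {y : V | s(a, y) ∈ F} with hT
  have hTne : T.Nonempty := haS.2
  obtain ⟨b, hbT, hbmin⟩ := Set.exists_min_image T (fun x => (G'.neighborSet x).ncard)
    (Set.toFinite T) hTne
  have haF : s(a, b) ∈ F := hbT
  have habAdj : G'.Adj a b := (G'.mem_edgeSet).mp (hF haF)
  have hbB : b ∈ B := hside a b habAdj haA
  have hminB : ∀ y ∈ T, G'.neighborSet b ⊆ G'.neighborSet y := by
    intro y hy
    have hyB : y ∈ B := hside a y ((G'.mem_edgeSet).mp (hF hy)) haA
    rcases compB b hbB y hyB with h | h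
    · exact h
    · have heq := Set.eq_of_subset_of_ncard_le h (hbmin y hy) (Set.toFinite _)
      exact heq.symm.subset
  -- the key contradiction lemma
  have contra : ∀ a2 b1 : V, G'.Adj a b1 → G'.Adj a2 b → ¬ G'.Adj a2 b1 → a2 ≠ a → False := by
    intro a2 b1 h1 h2 hn ha2
    have hb1B : b1 ∈ B := hside a b1 h1 haA
    have ha2A : a2 ∈ A := hsideB b a2 h2.symm hbB
    have hb1b : b1 ≠ b := by rintro rfl; exact hn h2
    by_cases hF1 : s(a, b1) ∈ F
    · have hbb1 := hminB b1 hF1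
      have h3 : a2 ∈ G'.neighborSet b := (G'.mem_neighborSet b a2).mpr h2.symm
      exact hn (((G'.mem_neighborSet b1 a2).mp (hbb1 h3)).symm)
    · by_cases hF2 : s(a2, b) ∈ F
      · have h3 := hminA a2 ⟨ha2A, b, hF2⟩
        exact hn ((G'.mem_neighborSet a2 b1).mp (h3 ((G'.mem_neighborSet a b1).mpr h1)))
      · -- 2K2 in G' - F
        refine hsafe.no2K2 (x1 := a) (y1 := b1) (x2 := a2) (y2 := b) ?_ ?_ ?_ ?_ ?_ ?_
        · exact (SimpleGraph.deleteEdges_adj).mpr ⟨h1, hF1⟩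
        · exact (SimpleGraph.deleteEdges_adj).mpr ⟨h2, hF2⟩
        · exact fun h => ((SimpleGraph.deleteEdges_adj).mp h).2 haF
        · exact fun h => hn ((SimpleGraph.deleteEdges_adj).mp h).1
        · exact fun h => hA haA ha2A (Ne.symm ha2) ((SimpleGraph.deleteEdges_adj).mp h).1
        · exact fun h => hB hb1B hbB hb1b ((SimpleGraph.deleteEdges_adj).mp h).1
  -- now show that deleting s(a,b) keeps a chain graph
  refine ⟨s(a, b), haF, A, B, hU, hI, ?_, ?_, ?_⟩
  · exact fun u hu v hv huv h =>
      hA hu hv huv ((SimpleGraph.deleteEdges_adj).mp h).1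
  · exact fun u hu v hv huv h =>
      hB hu hv huv ((SimpleGraph.deleteEdges_adj).mp h).1
  · set H := G'.deleteEdges {s(a, b)} with hH
    have hab_not : ¬ H.Adj a b := fun h =>
      ((SimpleGraph.deleteEdges_adj).mp h).2 (Set.mem_singleton _)
    have step : ∀ u v : V, u ∈ A → v ∈ A → G'.neighborSet u ⊆ G'.neighborSet v →
        (H.neighborSet u ⊆ H.neighborSet v ∨ H.neighborSet v ⊆ H.neighborSet u) := by
      intro u v hu hv hsub
      by_cases hva : v = a
      · by_cases hub : H.Adj u b
        · right
          have hua : u ≠ a := by rintro rfl; exact hab_not hub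
          intro x hx
          have hax := (SimpleGraph.deleteEdges_adj).mp ((H.mem_neighborSet v x).mp hx)
          have hxb : x ≠ b := by
            rintro rfl; exact hax.2 (Set.mem_singleton_iff.mpr (by rw [hva]))
          have hgux : G'.Adj u x := by
            by_contra hng
            have hub' : G'.Adj u b := ((SimpleGraph.deleteEdges_adj).mp hub).1
            exact contra u x (hva ▸ hax.1) hub' hng hua
          refine (H.mem_neighborSet u x).mpr ((SimpleGraph.deleteEdges_adj).mpr ⟨hgux, ?_⟩)
          intro hmemx
          rcases Sym2.eq_iff.mp (Set.mem_singleton_iff.mp hmemx) with ⟨h1, h2⟩ | ⟨h1, h2⟩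
          · exact hua h1
          · exact hdisj u hu (h1 ▸ hbB)
        · left
          intro x hx
          have hax := (SimpleGraph.deleteEdges_adj).mp ((H.mem_neighborSet u x).mp hx)
          have hgvx : G'.Adj v x := (G'.mem_neighborSet v x).mp
            (hsub ((G'.mem_neighborSet u x).mpr hax.1))
          have hxb : x ≠ b := fun hxe =>
            hub (hxe ▸ ((H.mem_neighborSet u x).mp hx))
          refine (H.mem_neighborSet v x).mpr ((SimpleGraph.deleteEdges_adj).mpr ⟨hgvx, ?_⟩)
          intro hmemx
          rcases Sym2.eq_iff.mp (Set.mem_singleton_iff.mp hmemx) with ⟨h1, h2⟩ | ⟨h1, h2⟩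
          · exact hxb h2
          · exact hdisj v hv (h1 ▸ hbB)
      · left
        intro x hx
        have hax := (SimpleGraph.deleteEdges_adj).mp ((H.mem_neighborSet u x).mp hx)
        have hgvx : G'.Adj v x := (G'.mem_neighborSet v x).mp
          (hsub ((G'.mem_neighborSet u x).mpr hax.1))
        refine (H.mem_neighborSet v x).mpr ((SimpleGraph.deleteEdges_adj).mpr ⟨hgvx, ?_⟩)
        intro hmemx
        rcases Sym2.eq_iff.mp (Set.mem_singleton_iff.mp hmemx) with ⟨h1, h2⟩ | ⟨h1, h2⟩
        · exact hva h1
        · exact hdisj v hv (h1 ▸ hbB)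
    intro u hu v hv
    rcases hord u hu v hv with hsub | hsub
    · exact step u v hu hv hsub
    · exact (step v u hv hu hsub).symm
end

section
/- Let G be a chain graph with chain partition (A₁, B₁, …, A_k, B_k, I), and let xy ∈ E(G) be an edge with x ∈ A₁ ∪ ⋯ ∪ A_k and y ∈ B₁ ∪ ⋯ ∪ B_k. Then G − xy is a chain graph if and only if there exists an index i ∈ {1,…,k} such that x ∈ A_i and y ∈ B_i. -/
open SimpleGraph

variable {V : Type*}

/-- Let `G` be a chain graph with chain partition `(A₁, B₁, …, A_k, B_k, I)` and let `xy` be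
an edge with `x ∈ A₁ ∪ ⋯ ∪ A_k` and `y ∈ B₁ ∪ ⋯ ∪ B_k`. Then `G − xy` is a chain graph iff
`x ∈ A i` and `y ∈ B i` for some `i`. -/
theorem stmt15 {V : Type*} [Fintype V] (G : SimpleGraph V) (k : ℕ) (A B : Fin k → Set V)
    (I : Set V) (hpart : IsChainPartition G k A B I) (x y : V) (hxy : G.Adj x y)
    (hx : x ∈ ⋃ i, A i) (hy : y ∈ ⋃ i, B i) :
    IsChainGraph (G.deleteEdges {s(x, y)}) ↔ ∃ i : Fin k, x ∈ A i ∧ y ∈ B i := by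
  obtain ⟨hA, hB, hI, hcov, hAA, hBB, hAB, hAI, hBI, hadj⟩ := hpart
  obtain ⟨i₀, hxA⟩ := Set.mem_iUnion.mp hx
  obtain ⟨j₀, hyB⟩ := Set.mem_iUnion.mp hy
  set G' := G.deleteEdges {s(x, y)} with hG'
  have dA : ∀ {i j : Fin k} {v : V}, v ∈ A i → v ∈ A j → i = j := by
    intro i j v hi hj
    by_contra hne
    exact Set.eq_empty_iff_forall_notMem.mp (hAA i j hne) v ⟨hi, hj⟩
  have dB : ∀ {i j : Fin k} {v : V}, v ∈ B i → v ∈ B j → i = j := by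
    intro i j v hi hj
    by_contra hne
    exact Set.eq_empty_iff_forall_notMem.mp (hBB i j hne) v ⟨hi, hj⟩
  have dAB : ∀ {i j : Fin k} {v : V}, v ∈ A i → v ∈ B j → False := by
    intro i j v hi hj
    exact Set.eq_empty_iff_forall_notMem.mp (hAB i j) v ⟨hi, hj⟩
  have adjA : ∀ {i : Fin k} {u v : V}, u ∈ A i → (G.Adj u v ↔ ∃ j, i ≤ j ∧ v ∈ B j) := by
    intro i u v hu
    rw [hadj]
    constructor
    · rintro ⟨i', j', hle, ⟨hu', hv'⟩ | ⟨hv', hu'⟩⟩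
      · exact ⟨j', (dA hu hu') ▸ hle, hv'⟩
      · exact (dAB hu hu').elim
    · rintro ⟨j, hle, hv⟩
      exact ⟨i, j, hle, Or.inl ⟨hu, hv⟩⟩
  have hle0 : i₀ ≤ j₀ := by
    obtain ⟨j, hj, hyj⟩ := (adjA hxA).mp hxy
    exact (dB hyj hyB) ▸ hj
  have toG : ∀ {u v : V}, G'.Adj u v → G.Adj u v := by
    intro u v h
    exact ((SimpleGraph.deleteEdges_adj).mp h).1
  have G'iff : ∀ u v : V, G'.Adj u v ↔ G.Adj u v ∧ s(u, v) ≠ s(x, y) := by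
    intro u v
    rw [hG', SimpleGraph.deleteEdges_adj]
    simp
  have ndxy : ¬ G'.Adj x y := by
    rw [G'iff]
    simp
  constructor
  · intro hchain
    by_contra hno
    have hlt : i₀ < j₀ := by
      rcases lt_or_eq_of_le hle0 with h | h
      · exact h
      · exact absurd ⟨i₀, hxA, by rw [h]; exact hyB⟩ hno
    obtain ⟨a, haA⟩ := hA j₀
    obtain ⟨b, hbB⟩ := hB i₀
    have bney : b ≠ y := by
      intro h
      exact hlt.ne (dB hbB (h ▸ hyB))
    have anex : a ≠ x := by
      intro h
      exact hlt.ne (dA (h ▸ haA) hxA).symm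
    have adjxb : G'.Adj x b := by
      rw [G'iff]
      refine ⟨(adjA hxA).mpr ⟨i₀, le_refl _, hbB⟩, ?_⟩
      intro hsym
      rcases Sym2.eq_iff.mp hsym with (⟨-, h⟩ | ⟨hxy', -⟩)
      · exact bney h
      · exact hxy.ne hxy'
    have adjay : G'.Adj a y := by
      rw [G'iff]
      refine ⟨(adjA haA).mpr ⟨j₀, le_refl _, hyB⟩, ?_⟩
      intro hsym
      rcases Sym2.eq_iff.mp hsym with (⟨h, -⟩ | ⟨h, -⟩)
      · exact anex h
      · exact dAB haA (h ▸ hyB)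
    have nxa : ¬ G.Adj x a := by
      intro h
      obtain ⟨j, -, hj⟩ := (adjA hxA).mp h
      exact dAB haA hj
    have nyb : ¬ G.Adj y b := by
      intro h
      rcases (hadj y b).mp h with ⟨i, j, -, ⟨h1, -⟩ | ⟨h1, -⟩⟩
      · exact dAB h1 hyB
      · exact dAB h1 hbB
    have nab : ¬ G.Adj a b := by
      intro h
      rcases (hadj a b).mp h with ⟨i, j, hle, ⟨h1, h2⟩ | ⟨h1, h2⟩⟩
      · rw [dA h1 haA, dB h2 hbB] at hle
        exact absurd hle (not_le.mpr hlt)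
      · exact dAB haA h2
    obtain ⟨X, Y, hXY, hXYd, hXp, hYp, hnest⟩ := hchain
    have mem : ∀ v : V, v ∈ X ∨ v ∈ Y := by
      intro v
      have : v ∈ X ∪ Y := hXY.symm ▸ Set.mem_univ v
      exact this
    have split : ∀ {u v : V}, G'.Adj u v → u ∈ X → v ∈ Y := by
      intro u v h hu
      rcases mem v with hv | hv
      · exact absurd h (hXp hu hv h.ne)
      · exact hv
    have split' : ∀ {u v : V}, G'.Adj u v → u ∈ Y → v ∈ X := by
      intro u v h hu
      rcases mem v with hv | hv
      · exact hv
      · exact absurd h (hYp hu hv h.ne)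
    rcases mem x with hxX | hxY
    · have hbY := split adjxb hxX
      rcases mem a with haX | haY
      · rcases hnest x hxX a haX with h | h
        · exact nab (toG (h ((SimpleGraph.mem_neighborSet _ _ _).mpr adjxb)))
        · exact ndxy (h ((SimpleGraph.mem_neighborSet _ _ _).mpr adjay))
      · have hyX := split' adjay haY
        rcases hnest x hxX y hyX with h | h
        · exact nyb (toG (h ((SimpleGraph.mem_neighborSet _ _ _).mpr adjxb)))
        · exact nxa (toG (h ((SimpleGraph.mem_neighborSet _ _ _).mpr adjay.symm)))
    · have hbX := split' adjxb hxY
      rcases mem a with haX | haY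
      · rcases hnest b hbX a haX with h | h
        · exact nxa (toG (h ((SimpleGraph.mem_neighborSet _ _ _).mpr adjxb.symm))).symm
        · exact nyb (toG (h ((SimpleGraph.mem_neighborSet _ _ _).mpr adjay))).symm
      · have hyX := split' adjay haY
        rcases hnest b hbX y hyX with h | h
        · exact ndxy (h ((SimpleGraph.mem_neighborSet _ _ _).mpr adjxb.symm)).symm
        · exact nab (toG (h ((SimpleGraph.mem_neighborSet _ _ _).mpr adjay.symm))).symm
  · rintro ⟨i, hxi, hyi⟩
    have Lstrict : ∀ {p q : Fin k} {up vq : V}, up ∈ A p → vq ∈ A q → p < q →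
        G'.neighborSet vq ⊆ G'.neighborSet up := by
      intro p q up vq hup hvq hpq w hw
      have hw' := (G'iff vq w).mp ((SimpleGraph.mem_neighborSet _ _ _).mp hw)
      obtain ⟨j, hj, hwB⟩ := (adjA hvq).mp hw'.1
      refine (SimpleGraph.mem_neighborSet _ _ _).mpr ((G'iff up w).mpr
        ⟨(adjA hup).mpr ⟨j, le_trans hpq.le hj, hwB⟩, ?_⟩)
      intro hsym
      rcases Sym2.eq_iff.mp hsym with (⟨h1, h2⟩ | ⟨h1, h2⟩)
      · have e1 : p = i := dA (h1 ▸ hup) hxi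
        have e2 : j = i := dB (h2 ▸ hwB) hyi
        rw [e1] at hpq
        rw [e2] at hj
        exact absurd (lt_of_lt_of_le hpq hj) (lt_irrefl i)
      · exact dAB hup (h1 ▸ hyi)
    have Lle : ∀ {p q : Fin k} {up vq : V}, up ∈ A p → vq ∈ A q → p ≤ q → up ≠ x →
        G'.neighborSet vq ⊆ G'.neighborSet up := by
      intro p q up vq hup hvq hpq hne w hw
      have hw' := (G'iff vq w).mp ((SimpleGraph.mem_neighborSet _ _ _).mp hw)
      obtain ⟨j, hj, hwB⟩ := (adjA hvq).mp hw'.1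
      refine (SimpleGraph.mem_neighborSet _ _ _).mpr ((G'iff up w).mpr
        ⟨(adjA hup).mpr ⟨j, le_trans hpq hj, hwB⟩, ?_⟩)
      intro hsym
      rcases Sym2.eq_iff.mp hsym with (⟨h1, h2⟩ | ⟨h1, h2⟩)
      · exact hne h1
      · exact dAB hup (h1 ▸ hyi)
    refine ⟨⋃ j, A j, (⋃ j, A j)ᶜ, Set.union_compl_self _, Set.inter_compl_self _, ?_, ?_, ?_⟩
    · intro u hu v hv hne hadj'
      obtain ⟨iu, hiu⟩ := Set.mem_iUnion.mp hu
      obtain ⟨iv, hiv⟩ := Set.mem_iUnion.mp hv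
      rcases (hadj u v).mp (toG hadj') with ⟨i', j', -, ⟨h1, h2⟩ | ⟨h1, h2⟩⟩
      · exact dAB hiv h2
      · exact dAB hiu h2
    · intro u hu v hv hne hadj'
      rcases (hadj u v).mp (toG hadj') with ⟨i', j', -, ⟨h1, h2⟩ | ⟨h1, h2⟩⟩
      · exact hu (Set.mem_iUnion.mpr ⟨i', h1⟩)
      · exact hv (Set.mem_iUnion.mpr ⟨i', h1⟩)
    · intro u hu v hv
      obtain ⟨iu, hiu⟩ := Set.mem_iUnion.mp hu
      obtain ⟨iv, hiv⟩ := Set.mem_iUnion.mp hv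
      rcases lt_trichotomy iu iv with h | h | h
      · exact Or.inr (Lstrict hiu hiv h)
      · by_cases hux : u = x
        · by_cases hvx : v = x
          · rw [hux, hvx]
            exact Or.inl subset_rfl
          · exact Or.inl (Lle hiv hiu h.ge hvx)
        · exact Or.inr (Lle hiu hiv h.le hux)
      · exact Or.inl (Lstrict hiv hiu h)
end
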